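/- arXiv:1912.11011 — 11 statements merged into one kernel-verified Lean document; each statement's English description precedes it below -/
import Mathlib

section
/- Let 0 < α ≤ 1, let G = (V,E) be a (k,α)-expander on n vertices, and let V₀ ⊆ V be a vertex set of size |V₀| ≤ εn where 0 < ε ≤ α²k/(8n). Then there exists a vertex set U ⊆ V∖V₀ of size |U| ≥ (1 − 3ε/α)n such that the induced subgraph G[U] is a (k, α/2)-expander. -/
open Finset SimpleGraph
open scoped Classical

/-- The external neighborhood of a vertex set `U` in `G`:
vertices outside `U` with a neighbor in `U`. -/
noncomputable def extNbhd {V : Type*} [Fintype V] (G : SimpleGraph V) (U : Finset V) :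
    Finset V :=
  Finset.univ.filter fun v => v ∉ U ∧ ∃ u ∈ U, G.Adj u v

/-- `G` is an `α`-expander: every vertex set `U` with `|U| ≤ ⌈n/2⌉` satisfies
`|N_G(U)| ≥ α|U|`. -/
def IsAlphaExpander {V : Type*} [Fintype V] (G : SimpleGraph V) (α : ℝ) : Prop :=
  ∀ U : Finset V, U.card ≤ (Fintype.card V + 1) / 2 →
    α * U.card ≤ ((extNbhd G U).card : ℝ)

/-- `G` is a `(k,α)`-expander: every vertex set `U` with `|U| ≤ k` satisfies
`|N_G(U)| ≥ α|U|`. -/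
def IsKExpander {V : Type*} [Fintype V] (G : SimpleGraph V) (k α : ℝ) : Prop :=
  ∀ U : Finset V, (U.card : ℝ) ≤ k → α * U.card ≤ ((extNbhd G U).card : ℝ)

/-- `G` is a `β`-graph: every pair of disjoint vertex sets of size at least `βn`
is connected by an edge. -/
def IsBetaGraph {V : Type*} [Fintype V] (G : SimpleGraph V) (β : ℝ) : Prop :=
  ∀ A B : Finset V, Disjoint A B → β * Fintype.card V ≤ A.card →
    β * Fintype.card V ≤ B.card → ∃ a ∈ A, ∃ b ∈ B, G.Adj a b

lemma mem_extNbhd {V : Type*} [Fintype V] (G : SimpleGraph V) (U : Finset V) (v : V) :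
    v ∈ extNbhd G U ↔ v ∉ U ∧ ∃ u ∈ U, G.Adj u v := by
  simp [extNbhd]

set_option maxHeartbeats 1000000 in
/-- deleting a small vertex set from a `(k,α)`-expander leaves a large
induced `(k, α/2)`-expander. -/
theorem expander_resilience {V : Type*} [Fintype V] (G : SimpleGraph V) (k α ε : ℝ)
    (hα0 : 0 < α) (hα1 : α ≤ 1) (hG : IsKExpander G k α)
    (hε0 : 0 < ε) (hε1 : ε ≤ α ^ 2 * k / (8 * Fintype.card V))
    (V₀ : Finset V) (hV₀ : (V₀.card : ℝ) ≤ ε * Fintype.card V) :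
    ∃ U : Finset V, U ⊆ Finset.univ \ V₀ ∧
      (1 - 3 * ε / α) * Fintype.card V ≤ (U.card : ℝ) ∧
      IsKExpander (G.induce (U : Set V)) k (α / 2) := by
  classical
  have hnpos : (0:ℝ) < (Fintype.card V : ℝ) := by
    by_contra h
    push_neg at h
    have h0 : ((Fintype.card V : ℝ)) = 0 := le_antisymm h (by positivity)
    rw [h0] at hε1
    simp at hε1
    linarith
  have hk : 0 < k := by
    by_contra h
    push_neg at h
    have : α ^ 2 * k / (8 * Fintype.card V) ≤ 0 := by
      apply div_nonpos_of_nonpos_of_nonneg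
      · nlinarith
      · positivity
    linarith
  have hεn : ε * (Fintype.card V : ℝ) ≤ α ^ 2 * k / 8 := by
    have h := mul_le_mul_of_nonneg_right hε1 hnpos.le
    calc ε * (Fintype.card V : ℝ)
        ≤ α ^ 2 * k / (8 * Fintype.card V) * Fintype.card V := h
      _ = α ^ 2 * k / 8 := by field_simp
  -- key sizing lemma
  have key : ∀ D : Finset V, (D.card : ℝ) ≤ k →
      (((extNbhd G D) \ V₀).card : ℝ) ≤ α / 2 * D.card →
      (D.card : ℝ) ≤ 2 * ε * Fintype.card V / α := by
    intro D hDk hDnb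
    have hexp := hG D hDk
    have hsplit : ((extNbhd G D) ∩ V₀).card + ((extNbhd G D) \ V₀).card
        = (extNbhd G D).card := Finset.card_inter_add_card_sdiff _ _
    have hV0' : (((extNbhd G D) ∩ V₀).card : ℝ) ≤ ε * Fintype.card V :=
      le_trans (by exact_mod_cast Finset.card_le_card Finset.inter_subset_right) hV₀
    have hbig : α * D.card ≤ ε * Fintype.card V + α / 2 * D.card := by
      have hcast : ((extNbhd G D).card : ℝ)
          = ((extNbhd G D ∩ V₀).card : ℝ) + ((extNbhd G D \ V₀).card : ℝ) := by
        exact_mod_cast hsplit.symm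
      rw [hcast] at hexp
      linarith
    rw [le_div_iff₀ hα0]
    nlinarith
  have h2εα : 2 * ε * (Fintype.card V : ℝ) / α ≤ α * k / 4 := by
    rw [div_le_iff₀ hα0]
    nlinarith
  -- the family of "bad" sets
  set S : Finset (Finset V) := Finset.univ.filter (fun D =>
    D ⊆ Finset.univ \ V₀ ∧ (D.card : ℝ) ≤ 2 * ε * Fintype.card V / α ∧
      (((extNbhd G D) \ V₀).card : ℝ) ≤ α / 2 * D.card) with hS
  have hSne : S.Nonempty := by
    refine ⟨∅, Finset.mem_filter.2 ⟨Finset.mem_univ _, Finset.empty_subset _, ?_, ?_⟩⟩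
    · simp only [Finset.card_empty, Nat.cast_zero]
      positivity
    · have : extNbhd G (∅ : Finset V) = ∅ := by
        ext v; simp [mem_extNbhd]
      simp [this]
  obtain ⟨D, hDS, hDmax⟩ := S.exists_max_image (fun D => D.card) hSne
  obtain ⟨-, hD1, hD2, hD3⟩ := Finset.mem_filter.1 hDS
  set U : Finset V := (Finset.univ \ V₀) \ D with hU
  have hUsub : U ⊆ Finset.univ \ V₀ := Finset.sdiff_subset
  refine ⟨U, hUsub, ?_, ?_⟩
  · -- size bound
    have hc1 : (Finset.univ \ V₀).card = Fintype.card V - V₀.card := by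
      rw [Finset.card_sdiff_of_subset (Finset.subset_univ _), Finset.card_univ]
    have hc2 : U.card = (Finset.univ \ V₀).card - D.card := Finset.card_sdiff_of_subset hD1
    have hDle : D.card ≤ Fintype.card V - V₀.card := hc1 ▸ Finset.card_le_card hD1
    have hV0le : V₀.card ≤ Fintype.card V := Finset.card_le_univ V₀
    have hcardU : (U.card : ℝ) = (Fintype.card V : ℝ) - V₀.card - D.card := by
      rw [hc2, hc1, Nat.cast_sub hDle, Nat.cast_sub hV0le]
    have haux : ε * (Fintype.card V : ℝ) ≤ ε * Fintype.card V / α := by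
      rw [le_div_iff₀ hα0]
      nlinarith
    have h3 : (1 - 3 * ε / α) * (Fintype.card V : ℝ)
        = (Fintype.card V : ℝ) - ε * Fintype.card V / α
          - 2 * ε * Fintype.card V / α := by ring
    rw [hcardU, h3]
    linarith
  · -- expansion
    intro W' hW'
    by_contra hcon
    push_neg at hcon
    set W : Finset V := W'.image Subtype.val with hWdef
    have hcardW : W.card = W'.card := Finset.card_image_of_injective W' Subtype.val_injective
    have hWU : W ⊆ U := by
      intro v hv
      obtain ⟨x, hx, rfl⟩ := Finset.mem_image.1 hv
      exact Finset.mem_coe.1 x.2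
    have himg : extNbhd G W ∩ U ⊆
        (extNbhd (G.induce (U : Set V)) W').image Subtype.val := by
      intro v hv
      obtain ⟨hv1, hvU⟩ := Finset.mem_inter.1 hv
      obtain ⟨hvW, u, huW, hadj⟩ := (mem_extNbhd G W v).1 hv1
      obtain ⟨y, hyW', hyv⟩ := Finset.mem_image.1 huW
      refine Finset.mem_image.2 ⟨⟨v, Finset.mem_coe.2 hvU⟩, ?_, rfl⟩
      rw [mem_extNbhd]
      refine ⟨fun hx => hvW (Finset.mem_image.2 ⟨_, hx, rfl⟩), y, hyW', ?_⟩
      show G.Adj (y : V) v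
      rw [hyv]
      exact hadj
    have hconW : ((extNbhd G W ∩ U).card : ℝ) < α / 2 * W.card := by
      calc ((extNbhd G W ∩ U).card : ℝ)
          ≤ (((extNbhd (G.induce (U : Set V)) W').image Subtype.val).card : ℝ) := by
            exact_mod_cast Finset.card_le_card himg
        _ ≤ ((extNbhd (G.induce (U : Set V)) W').card : ℝ) := by
            exact Nat.cast_le.mpr Finset.card_image_le
        _ < α / 2 * W'.card := hcon
        _ = α / 2 * W.card := by rw [hcardW]
    have hWpos : (0:ℝ) < W.card := by
      rcases Nat.eq_zero_or_pos W.card with h | h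
      · rw [h] at hconW
        norm_num at hconW
        exact absurd hconW (not_lt.mpr (Nat.cast_nonneg _))
      · exact_mod_cast h
    have hWk : (W.card : ℝ) ≤ k := by
      rw [hcardW]
      exact hW'
    rcases le_or_gt ((D.card : ℝ) + W.card) k with h1 | h2
    · -- D ∪ W is a bigger bad set
      have hdisj : Disjoint D W := by
        rw [Finset.disjoint_left]
        intro a haD haW
        exact (Finset.mem_sdiff.1 (hWU haW)).2 haD
      have hDW : ((D ∪ W).card : ℝ) = D.card + W.card := by
        rw [Finset.card_union_of_disjoint hdisj]
        push_cast
        ring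
      have hsub : extNbhd G (D ∪ W) \ V₀ ⊆ (extNbhd G D \ V₀) ∪ (extNbhd G W ∩ U) := by
        intro v hv
        obtain ⟨hv1, hvV0⟩ := Finset.mem_sdiff.1 hv
        obtain ⟨hvDW, u, huDW, hadj⟩ := (mem_extNbhd G (D ∪ W) v).1 hv1
        have hvD : v ∉ D := fun h => hvDW (Finset.mem_union_left _ h)
        have hvW : v ∉ W := fun h => hvDW (Finset.mem_union_right _ h)
        rcases Finset.mem_union.1 huDW with h | h
        · exact Finset.mem_union_left _ (Finset.mem_sdiff.2
            ⟨(mem_extNbhd G D v).2 ⟨hvD, u, h, hadj⟩, hvV0⟩)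
        · refine Finset.mem_union_right _ (Finset.mem_inter.2
            ⟨(mem_extNbhd G W v).2 ⟨hvW, u, h, hadj⟩, ?_⟩)
          exact Finset.mem_sdiff.2 ⟨Finset.mem_sdiff.2 ⟨Finset.mem_univ v, hvV0⟩, hvD⟩
      have hnb : (((extNbhd G (D ∪ W)) \ V₀).card : ℝ) ≤ α / 2 * (D ∪ W).card := by
        have hle : ((extNbhd G (D ∪ W) \ V₀).card : ℝ)
            ≤ ((extNbhd G D \ V₀).card : ℝ) + ((extNbhd G W ∩ U).card : ℝ) := by
          calc ((extNbhd G (D ∪ W) \ V₀).card : ℝ)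
              ≤ (((extNbhd G D \ V₀) ∪ (extNbhd G W ∩ U)).card : ℝ) := by
                exact_mod_cast Finset.card_le_card hsub
            _ ≤ _ := by exact_mod_cast Finset.card_union_le _ _
        rw [hDW]
        nlinarith
      have hmem : D ∪ W ∈ S := by
        refine Finset.mem_filter.2 ⟨Finset.mem_univ _, ?_, ?_, hnb⟩
        · exact Finset.union_subset hD1 (hWU.trans hUsub)
        · exact key _ (by rw [hDW]; exact h1) hnb
      have := hDmax _ hmem
      have h' : ((D ∪ W).card : ℝ) ≤ D.card := by exact_mod_cast this
      rw [hDW] at h'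
      linarith
    · -- |D| + |W| > k : contradiction by expanding W itself
      have hDk4 : (D.card : ℝ) ≤ α * k / 4 := le_trans hD2 h2εα
      have hexpW := hG W hWk
      have hsubW : extNbhd G W ⊆ V₀ ∪ D ∪ (extNbhd G W ∩ U) := by
        intro v hv
        obtain ⟨hvW, u, huW, hadj⟩ := (mem_extNbhd G W v).1 hv
        by_cases hv0 : v ∈ V₀
        · exact Finset.mem_union_left _ (Finset.mem_union_left _ hv0)
        by_cases hvD : v ∈ D
        · exact Finset.mem_union_left _ (Finset.mem_union_right _ hvD)
        refine Finset.mem_union_right _ (Finset.mem_inter.2 ⟨hv, ?_⟩)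
        exact Finset.mem_sdiff.2 ⟨Finset.mem_sdiff.2 ⟨Finset.mem_univ v, hv0⟩, hvD⟩
      have hcardle : ((extNbhd G W).card : ℝ)
          ≤ (V₀.card : ℝ) + D.card + ((extNbhd G W ∩ U).card : ℝ) := by
        calc ((extNbhd G W).card : ℝ)
            ≤ ((V₀ ∪ D ∪ (extNbhd G W ∩ U)).card : ℝ) := by
              exact_mod_cast Finset.card_le_card hsubW
          _ ≤ ((V₀ ∪ D).card : ℝ) + ((extNbhd G W ∩ U).card : ℝ) := by
              exact_mod_cast Finset.card_union_le _ _
          _ ≤ _ := by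
              have : ((V₀ ∪ D).card : ℝ) ≤ (V₀.card : ℝ) + D.card := by
                exact_mod_cast Finset.card_union_le _ _
              linarith
      have hstep : α / 2 * (W.card : ℝ) < ε * Fintype.card V + α * k / 4 := by linarith
      have hstep2 : α / 2 * (W.card : ℝ) < α ^ 2 * k / 8 + α * k / 4 := by linarith
      have hWbig : k - α * k / 4 < (W.card : ℝ) := by linarith
      nlinarith [mul_le_mul_of_nonneg_left hWbig.le hα0.le, mul_pos hα0 hk,
        mul_le_mul_of_nonneg_right (mul_le_of_le_one_left hα0.le hα1) hk.le]
end

section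
/- Let G = (V,E) be an α-expander and let A, B ⊆ V be two (not necessarily disjoint) vertex sets with |A|, |B| ≥ t for some t > 0. Then G contains at least tα/(1+α) vertex-disjoint paths, each with one endpoint in A and one endpoint in B. -/
open Finset SimpleGraph
open scoped Classical

section MengerDev

set_option linter.unusedSectionVars false
set_option linter.unusedVariables false

variable {V : Type*} [Fintype V]

/-- `S` separates `A` from `B` in `G`: every walk from `A` to `B` meets `S`. -/
def MSep (G : SimpleGraph V) (A B S : Finset V) : Prop :=
  ∀ ⦃a⦄, a ∈ A → ∀ ⦃b⦄, b ∈ B → ∀ p : G.Walk a b, ∃ s ∈ S, s ∈ p.support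

/-- `k` pairwise vertex-disjoint `A`–`B` paths. -/
def MPaths (G : SimpleGraph V) (A B : Finset V) (k : ℕ) : Prop :=
  ∃ (e : Fin k → V × V) (p : ∀ i, G.Walk (e i).1 (e i).2),
    (∀ i, (p i).IsPath ∧ (e i).1 ∈ A ∧ (e i).2 ∈ B) ∧
    ∀ i j, i ≠ j → ∀ x, x ∈ (p i).support → x ∉ (p j).support

lemma MSep.symm {G : SimpleGraph V} {A B S : Finset V} (h : MSep G A B S) :
    MSep G B A S := by
  intro b hb a ha p
  obtain ⟨s, hs, hsp⟩ := h ha hb p.reverse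
  exact ⟨s, hs, by simpa using hsp⟩

lemma mpaths_of_inter {G : SimpleGraph V} {A B : Finset V} {k : ℕ}
    (h : k ≤ (A ∩ B).card) : MPaths G A B k := by
  obtain ⟨t, hts, htc⟩ := Finset.exists_subset_card_eq h
  have e0 : Fin k ≃ {x // x ∈ t} := (Fintype.equivFinOfCardEq (by simpa using htc)).symm
  refine ⟨fun i => ((e0 i : V), (e0 i : V)), fun i => SimpleGraph.Walk.nil, ?_, ?_⟩
  · intro i
    have := hts (e0 i).2
    simp only [Finset.mem_inter] at this
    exact ⟨SimpleGraph.Walk.IsPath.nil, this.1, this.2⟩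
  · intro i j hij x hx hx'
    simp only [SimpleGraph.Walk.support_nil, List.mem_singleton] at hx hx'
    exact hij (e0.injective (Subtype.ext (by rw [← hx, hx'])))

/-- Initial segment of a walk up to the first vertex of `S` it meets. -/
lemma exists_prefix_to_sep {G : SimpleGraph V} (S : Finset V) {a b : V} :
    ∀ (p : G.Walk a b), (∃ s ∈ S, s ∈ p.support) →
    ∃ s ∈ S, ∃ q : G.Walk a s, (∀ w ∈ q.support, w ∈ p.support) ∧
      (∀ e ∈ q.edges, e ∈ p.edges) ∧ (∀ w ∈ q.support, w ∈ S → w = s) := by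
  intro p
  induction p with
  | nil =>
    rintro ⟨s, hs, hsp⟩
    simp only [SimpleGraph.Walk.support_nil, List.mem_singleton] at hsp
    subst hsp
    exact ⟨s, hs, SimpleGraph.Walk.nil, by simp, by simp, by simp⟩
  | @cons u w v h p ih =>
    rintro ⟨s, hs, hsp⟩
    by_cases hu : u ∈ S
    · exact ⟨u, hu, SimpleGraph.Walk.nil, by simp, by simp, by simp⟩
    · have hsp' : s ∈ p.support := by
        rcases (by simpa [SimpleGraph.Walk.support_cons] using hsp : s = u ∨ s ∈ p.support) with h1 | h1
        · exact absurd (h1 ▸ hs) hu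
        · exact h1
      obtain ⟨s', hs', q, hq1, hq2, hq3⟩ := ih ⟨s, hs, hsp'⟩
      refine ⟨s', hs', SimpleGraph.Walk.cons h q, ?_, ?_, ?_⟩
      · intro x hx
        rcases (by simpa [SimpleGraph.Walk.support_cons] using hx : x = u ∨ x ∈ q.support) with h1 | h1
        · simp [h1]
        · simp [hq1 x h1]
      · intro e he
        simp only [SimpleGraph.Walk.edges_cons, List.mem_cons] at he ⊢
        rcases he with h1 | h1
        · exact Or.inl h1
        · exact Or.inr (hq2 e h1)
      · intro x hx hxS
        rcases (by simpa [SimpleGraph.Walk.support_cons] using hx : x = u ∨ x ∈ q.support) with h1 | h1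
        · exact absurd (h1 ▸ hxS) hu
        · exact hq3 x h1 hxS

/-- Contraction of the edge `xy`, merging `y` into `x` (leaving `y` isolated). -/
def mctr (G : SimpleGraph V) (x y : V) : SimpleGraph V where
  Adj u w := u ≠ w ∧ ((u ≠ y ∧ w ≠ y ∧ G.Adj u w) ∨ (u = x ∧ w ≠ y ∧ G.Adj y w) ∨
    (w = x ∧ u ≠ y ∧ G.Adj y u))
  symm := by
    constructor; rintro u w ⟨hne, h⟩
    refine ⟨hne.symm, ?_⟩
    rcases h with ⟨h1, h2, h3⟩ | ⟨h1, h2, h3⟩ | ⟨h1, h2, h3⟩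
    · exact Or.inl ⟨h2, h1, h3.symm⟩
    · exact Or.inr (Or.inr ⟨h1, h2, h3⟩)
    · exact Or.inr (Or.inl ⟨h1, h2, h3⟩)
  loopless := by constructor; rintro u ⟨hne, -⟩; exact hne rfl

lemma mctr_ne_y {G : SimpleGraph V} {x y u w : V} (hxy : x ≠ y)
    (h : (mctr G x y).Adj u w) : u ≠ y ∧ w ≠ y := by
  obtain ⟨hne, h⟩ := h
  rcases h with ⟨h1, h2, h3⟩ | ⟨h1, h2, h3⟩ | ⟨h1, h2, h3⟩
  · exact ⟨h1, h2⟩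
  · exact ⟨h1 ▸ hxy, h2⟩
  · exact ⟨h2, h1 ▸ hxy⟩

lemma mctr_of_adj {G : SimpleGraph V} {x y u w : V} (h : G.Adj u w)
    (hu : u ≠ y) (hw : w ≠ y) : (mctr G x y).Adj u w :=
  ⟨h.ne, Or.inl ⟨hu, hw, h⟩⟩

/-- Walks in the contraction lift to walks in `G` (exact endpoints). -/
lemma mctr_walk_lift0 {G : SimpleGraph V} {x y : V} (hxy : G.Adj x y) :
    ∀ {u v : V} (p : (mctr G x y).Walk u v), u ≠ y → v ≠ y →
    ∃ q : G.Walk u v, (∀ w ∈ q.support, w = y ∨ w ∈ p.support) ∧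
      (y ∈ q.support → x ∈ p.support) := by
  intro u v p
  induction p with
  | nil =>
    intro hu hv
    exact ⟨SimpleGraph.Walk.nil, by simp, by simp [hu.symm]⟩
  | @cons u w v h p ih =>
    intro hu hv
    have hw : w ≠ y := (mctr_ne_y hxy.ne h).2
    obtain ⟨hne, hcase⟩ := h
    rcases hcase with ⟨h1, h2, h3⟩ | ⟨h1, h2, h3⟩ | ⟨h1, h2, h3⟩
    · -- genuine edge of G
      obtain ⟨q, hq1, hq2⟩ := ih hw hv
      refine ⟨SimpleGraph.Walk.cons h3 q, ?_, ?_⟩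
      · intro z hz
        rcases (by simpa [SimpleGraph.Walk.support_cons] using hz :
            z = u ∨ z ∈ q.support) with h' | h'
        · exact Or.inr (by simp [h'])
        · rcases hq1 z h' with h'' | h''
          · exact Or.inl h''
          · exact Or.inr (List.mem_cons_of_mem _ h'')
      · intro hy
        rcases (by simpa [SimpleGraph.Walk.support_cons] using hy :
            y = u ∨ y ∈ q.support) with h' | h'
        · exact absurd h'.symm hu
        · exact List.mem_cons_of_mem _ (hq2 h')
    · -- u = x, edge of G from y to w : route u (= x) – y – w
      subst h1
      obtain ⟨q, hq1, hq2⟩ := ih hw hv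
      refine ⟨SimpleGraph.Walk.cons hxy (SimpleGraph.Walk.cons h3 q), ?_, ?_⟩
      · intro z hz
        rcases (by simpa [SimpleGraph.Walk.support_cons] using hz :
            z = u ∨ z = y ∨ z ∈ q.support) with h' | h' | h'
        · exact Or.inr (by simp [h'])
        · exact Or.inl h'
        · rcases hq1 z h' with h'' | h''
          · exact Or.inl h''
          · exact Or.inr (List.mem_cons_of_mem _ h'')
      · intro _; simp
    · -- w = x, edge of G from y to u : route u – y – x (= w)
      subst h1
      obtain ⟨q, hq1, hq2⟩ := ih hw hv
      refine ⟨SimpleGraph.Walk.cons h3.symm (SimpleGraph.Walk.cons hxy.symm q), ?_, ?_⟩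
      · intro z hz
        rcases (by simpa [SimpleGraph.Walk.support_cons] using hz :
            z = u ∨ z = y ∨ z ∈ q.support) with h' | h' | h'
        · exact Or.inr (by simp [h'])
        · exact Or.inl h'
        · rcases hq1 z h' with h'' | h''
          · exact Or.inl h''
          · exact Or.inr (List.mem_cons_of_mem _ h'')
      · intro _; exact List.mem_cons_of_mem _ p.start_mem_support

lemma mctr_walk_lift {G : SimpleGraph V} {x y : V} (hxy : G.Adj x y) {u v u' v' : V}
    (p : (mctr G x y).Walk u v) (hu : u ≠ y) (hv : v ≠ y)
    (hu' : u' = u ∨ (u = x ∧ u' = y)) (hv' : v' = v ∨ (v = x ∧ v' = y)) :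
    ∃ q : G.Walk u' v', (∀ w ∈ q.support, w = y ∨ w ∈ p.support) ∧
      (y ∈ q.support → x ∈ p.support) := by
  obtain ⟨q0, hq1, hq2⟩ := mctr_walk_lift0 hxy p hu hv
  have step1 : ∃ q : G.Walk u' v, (∀ w ∈ q.support, w = y ∨ w ∈ p.support) ∧
      (y ∈ q.support → x ∈ p.support) := by
    rcases hu' with h | ⟨hux, huy⟩
    · subst h; exact ⟨q0, hq1, hq2⟩
    · subst huy; subst hux
      refine ⟨SimpleGraph.Walk.cons hxy.symm q0, ?_, ?_⟩
      · intro z hz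
        rw [SimpleGraph.Walk.support_cons] at hz
        rcases List.mem_cons.1 hz with h' | h'
        · exact Or.inl h'
        · exact hq1 z h'
      · intro _; exact p.start_mem_support
  obtain ⟨q1, hr1, hr2⟩ := step1
  rcases hv' with h | ⟨hvx, hvy⟩
  · subst h; exact ⟨q1, hr1, hr2⟩
  · subst hvy; subst hvx
    refine ⟨q1.concat hxy, ?_, ?_⟩
    · intro z hz
      rw [SimpleGraph.Walk.support_concat] at hz
      rcases List.mem_append.1 hz with h' | h'
      case _ => exact hr1 z h'
      case _ => exact Or.inl (List.mem_singleton.1 h')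
    · intro _; exact p.end_mem_support

/-- Replace `y` by `x` in a vertex set. -/
noncomputable def mrepl (x y : V) (A : Finset V) : Finset V := A.image fun z => if z = y then x else z

lemma mem_mrepl_of_ne {x y : V} {A : Finset V} {a : V} (ha : a ∈ A) (hay : a ≠ y) :
    a ∈ mrepl x y A := Finset.mem_image.2 ⟨a, ha, by simp [hay]⟩

lemma y_not_mem_mrepl {x y : V} (hxy : x ≠ y) {A : Finset V} : y ∉ mrepl x y A := by
  intro h
  obtain ⟨z, hz, hz'⟩ := Finset.mem_image.1 h
  by_cases h' : z = y
  · rw [if_pos h'] at hz'; exact hxy hz'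
  · rw [if_neg h'] at hz'; exact h' hz'

lemma mrepl_cases {x y : V} {A : Finset V} {u : V} (hu : u ∈ mrepl x y A) :
    ∃ u', u' ∈ A ∧ (u' = u ∨ (u = x ∧ u' = y)) := by
  obtain ⟨z, hz, hz'⟩ := Finset.mem_image.1 hu
  by_cases h' : z = y
  · subst h'
    simp only [if_pos rfl] at hz'
    exact ⟨z, hz, Or.inr ⟨hz'.symm, rfl⟩⟩
  · simp only [if_neg h'] at hz'
    exact ⟨z, hz, Or.inl hz'⟩

/-- Case A glue: disjoint paths in the contraction lift to disjoint paths in `G`. -/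
lemma mpaths_of_mctr {G : SimpleGraph V} {x y : V} (hxy : G.Adj x y)
    {A B : Finset V} {k : ℕ} (h : MPaths (mctr G x y) (mrepl x y A) (mrepl x y B) k) :
    MPaths G A B k := by
  obtain ⟨e, p, hp, hdisj⟩ := h
  have H : ∀ i, ∃ (u' v' : V) (q : G.Walk u' v'), u' ∈ A ∧ v' ∈ B ∧ q.IsPath ∧
      (∀ w ∈ q.support, w = y ∨ w ∈ (p i).support) ∧
      (y ∈ q.support → x ∈ (p i).support) := by
    intro i
    obtain ⟨hpath, hA, hB⟩ := hp i
    have hu : (e i).1 ≠ y := fun h' => y_not_mem_mrepl hxy.ne (h' ▸ hA)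
    have hv : (e i).2 ≠ y := fun h' => y_not_mem_mrepl hxy.ne (h' ▸ hB)
    obtain ⟨u', hu'A, hu'⟩ := mrepl_cases hA
    obtain ⟨v', hv'B, hv'⟩ := mrepl_cases hB
    obtain ⟨q, hq1, hq2⟩ := mctr_walk_lift hxy (p i) hu hv hu' hv'
    refine ⟨u', v', q.bypass, hu'A, hv'B, q.bypass_isPath, ?_, ?_⟩
    · intro w hw; exact hq1 w (q.support_bypass_subset hw)
    · intro hy; exact hq2 (q.support_bypass_subset hy)
  choose u' v' q hA hB hpath hsup hy using H
  refine ⟨fun i => (u' i, v' i), q, fun i => ⟨hpath i, hA i, hB i⟩, ?_⟩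
  intro i j hij w hwi hwj
  by_cases hwy : w = y
  · subst hwy
    exact hdisj i j hij x (hy i hwi) (hy j hwj)
  · exact hdisj i j hij w ((hsup i w hwi).resolve_left hwy)
      ((hsup j w hwj).resolve_left hwy)

/-- Walks in `G` project to walks in the contraction. -/
lemma mctr_walk_proj {G : SimpleGraph V} {x y : V} (hxy : G.Adj x y) :
    ∀ {a b : V} (p : G.Walk a b),
    ∃ q : (mctr G x y).Walk (if a = y then x else a) (if b = y then x else b),
      ∀ w ∈ q.support, ∃ z ∈ p.support, w = if z = y then x else z := by
  intro a b p
  induction p with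
  | @nil u =>
    refine ⟨SimpleGraph.Walk.nil, ?_⟩
    intro w hw
    rw [SimpleGraph.Walk.support_nil, List.mem_singleton] at hw
    exact ⟨u, by simp, hw⟩
  | @cons u w v h p ih =>
    obtain ⟨q', hq'⟩ := ih
    by_cases hgu : (if u = y then x else u) = (if w = y then x else w)
    · refine ⟨q'.copy hgu.symm rfl, ?_⟩
      intro z hz
      rw [SimpleGraph.Walk.support_copy] at hz
      obtain ⟨z', hz', hz''⟩ := hq' z hz
      exact ⟨z', by simp [SimpleGraph.Walk.support_cons, hz'], hz''⟩
    · have hadj : (mctr G x y).Adj (if u = y then x else u) (if w = y then x else w) := by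
        refine ⟨hgu, ?_⟩
        by_cases huy : u = y
        · by_cases hwy : w = y
          · exact absurd (by rw [if_pos huy, if_pos hwy]) hgu
          · rw [if_pos huy, if_neg hwy]
            exact Or.inr (Or.inl ⟨rfl, hwy, huy ▸ h⟩)
        · by_cases hwy : w = y
          · rw [if_neg huy, if_pos hwy]
            exact Or.inr (Or.inr ⟨rfl, huy, hwy ▸ h.symm⟩)
          · rw [if_neg huy, if_neg hwy]
            exact Or.inl ⟨huy, hwy, h⟩
      refine ⟨SimpleGraph.Walk.cons hadj q', ?_⟩
      intro z hz
      rw [SimpleGraph.Walk.support_cons] at hz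
      rcases List.mem_cons.1 hz with h' | h'
      · exact ⟨u, by simp [SimpleGraph.Walk.support_cons], h'⟩
      · obtain ⟨z', hz', hz''⟩ := hq' z h'
        exact ⟨z', by simp [SimpleGraph.Walk.support_cons, hz'], hz''⟩

/-- No walk in the contraction starting outside `y` ever visits `y`. -/
lemma mctr_support_ne_y {G : SimpleGraph V} {x y : V} (hxy : x ≠ y) :
    ∀ {a b : V} (p : (mctr G x y).Walk a b), a ≠ y → ∀ w ∈ p.support, w ≠ y := by
  intro a b p
  induction p with
  | @nil u =>
    intro ha w hw
    rw [SimpleGraph.Walk.support_nil, List.mem_singleton] at hw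
    exact hw ▸ ha
  | @cons u c v h p ih =>
    intro ha w hw
    rw [SimpleGraph.Walk.support_cons] at hw
    rcases List.mem_cons.1 hw with h' | h'
    · exact h' ▸ ha
    · exact ih (mctr_ne_y hxy h).2 w h'

/-- If `S₂` separates the replaced sets in the contraction and `x ∉ S₂`, `y ∉ S₂`,
then `S₂` separates `A` from `B` in `G`. -/
lemma msep_of_mctr_noxy {G : SimpleGraph V} {x y : V} (hxy : G.Adj x y)
    {A B S₂ : Finset V} (hsep : MSep (mctr G x y) (mrepl x y A) (mrepl x y B) S₂)
    (hx : x ∉ S₂) (hy : y ∉ S₂) : MSep G A B S₂ := by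
  intro a ha b hb p
  obtain ⟨q, hq⟩ := mctr_walk_proj hxy p
  have haA : (if a = y then x else a) ∈ mrepl x y A := Finset.mem_image.2 ⟨a, ha, rfl⟩
  have hbB : (if b = y then x else b) ∈ mrepl x y B := Finset.mem_image.2 ⟨b, hb, rfl⟩
  obtain ⟨s, hs, hsq⟩ := hsep haA hbB q
  obtain ⟨z, hz, hz'⟩ := hq s hsq
  by_cases hzy : z = y
  · rw [if_pos hzy] at hz'; exact absurd (hz' ▸ hs) hx
  · rw [if_neg hzy] at hz'; exact ⟨s, hs, hz' ▸ hz⟩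

/-- If `S₂` separates the replaced sets in the contraction and `x ∈ S₂`, `y ∉ S₂`,
then `insert y S₂` separates `A` from `B` in `G`. -/
lemma msep_of_mctr_x {G : SimpleGraph V} {x y : V} (hxy : G.Adj x y)
    {A B S₂ : Finset V} (hsep : MSep (mctr G x y) (mrepl x y A) (mrepl x y B) S₂) :
    MSep G A B (insert y S₂) := by
  intro a ha b hb p
  by_cases hyp : y ∈ p.support
  · exact ⟨y, Finset.mem_insert_self _ _, hyp⟩
  obtain ⟨q, hq⟩ := mctr_walk_proj hxy p
  have haA : (if a = y then x else a) ∈ mrepl x y A := Finset.mem_image.2 ⟨a, ha, rfl⟩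
  have hbB : (if b = y then x else b) ∈ mrepl x y B := Finset.mem_image.2 ⟨b, hb, rfl⟩
  obtain ⟨s, hs, hsq⟩ := hsep haA hbB q
  obtain ⟨z, hz, hz'⟩ := hq s hsq
  by_cases hzy : z = y
  · exact absurd (hzy ▸ hz) hyp
  · rw [if_neg hzy] at hz'
    exact ⟨s, Finset.mem_insert_of_mem hs, hz' ▸ hz⟩

/-- Erasing `y` keeps a separator in the contraction a separator. -/
lemma msep_mctr_erase_y {G : SimpleGraph V} {x y : V} (hxy : G.Adj x y)
    {A B S₂ : Finset V} (hsep : MSep (mctr G x y) (mrepl x y A) (mrepl x y B) S₂) :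
    MSep (mctr G x y) (mrepl x y A) (mrepl x y B) (S₂.erase y) := by
  intro a ha b hb p
  obtain ⟨s, hs, hsp⟩ := hsep ha hb p
  have hay : a ≠ y := fun h => y_not_mem_mrepl hxy.ne (h ▸ ha)
  have hsy : s ≠ y := mctr_support_ne_y hxy.ne p hay s hsp
  exact ⟨s, Finset.mem_erase.2 ⟨hsy, hs⟩, hsp⟩

lemma msep_left {G : SimpleGraph V} {x y : V} (hxy : G.Adj x y) {A B S T : Finset V}
    (hx : x ∈ S) (hy : y ∈ S) (hS : MSep G A B S)
    (hT : MSep (G.deleteEdges {s(x, y)}) A S T) : MSep G A B T := by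
  intro a ha b hb p
  obtain ⟨s, hsS, q, hq1, hq2, hq3⟩ := exists_prefix_to_sep S p (hS ha hb p)
  have hxyq : s(x, y) ∉ q.edges := by
    intro hmem
    have hxq := q.fst_mem_support_of_mem_edges hmem
    have hyq := q.snd_mem_support_of_mem_edges hmem
    have e1 := hq3 x hxq hx
    have e2 := hq3 y hyq hy
    exact hxy.ne (e1.trans e2.symm)
  have htr : ∀ e ∈ q.edges, e ∈ (G.deleteEdges {s(x, y)}).edgeSet := by
    intro e he
    rw [SimpleGraph.edgeSet_deleteEdges]
    refine ⟨q.edges_subset_edgeSet he, ?_⟩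
    intro hcontra
    rw [Set.mem_singleton_iff] at hcontra
    exact hxyq (hcontra ▸ he)
  obtain ⟨t, htT, htq⟩ := hT ha hsS (q.transfer _ htr)
  rw [SimpleGraph.Walk.support_transfer] at htq
  exact ⟨t, htT, hq1 t htq⟩

lemma mdel_edge_lt {G : SimpleGraph V} {x y : V} (hxy : G.Adj x y) :
    (G.deleteEdges {s(x, y)}).edgeFinset.card < G.edgeFinset.card := by
  apply Finset.card_lt_card
  rw [Finset.ssubset_iff_of_subset]
  · exact ⟨s(x, y), by simp [SimpleGraph.mem_edgeFinset, hxy], by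
      simp [SimpleGraph.mem_edgeFinset, SimpleGraph.edgeSet_deleteEdges]⟩
  · intro e he
    rw [SimpleGraph.mem_edgeFinset, SimpleGraph.edgeSet_deleteEdges] at he
    exact SimpleGraph.mem_edgeFinset.2 he.1

lemma mctr_y_not_in_edge {G : SimpleGraph V} {x y : V} (hxy : x ≠ y) {ed : Sym2 V}
    (hed : ed ∈ (mctr G x y).edgeSet) : y ∉ ed := by
  induction ed using Sym2.ind with
  | _ u w =>
    rw [SimpleGraph.mem_edgeSet] at hed
    obtain ⟨h1, h2⟩ := mctr_ne_y hxy hed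
    rw [Sym2.mem_iff]
    rintro (rfl | rfl)
    · exact h1 rfl
    · exact h2 rfl

lemma mctr_edge_lt {G : SimpleGraph V} {x y : V} (hxy : G.Adj x y) :
    (mctr G x y).edgeFinset.card < G.edgeFinset.card := by
  classical
  set g : V → V := fun v => if v = x then y else v with hg
  set f : Sym2 V → Sym2 V := fun ed => if ed ∈ G.edgeSet then ed else Sym2.map g ed with hf
  -- form of non-G edges of the contraction
  have hform : ∀ u w : V, (mctr G x y).Adj u w → s(u, w) ∉ G.edgeSet →
      (u = x ∧ w ≠ x ∧ w ≠ y ∧ G.Adj y w) ∨ (w = x ∧ u ≠ x ∧ u ≠ y ∧ G.Adj y u) := by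
    intro u w hadj hno
    rw [SimpleGraph.mem_edgeSet] at hno
    obtain ⟨hne, hc⟩ := hadj
    rcases hc with ⟨h1, h2, h3⟩ | ⟨h1, h2, h3⟩ | ⟨h1, h2, h3⟩
    · exact absurd h3 hno
    · exact Or.inl ⟨h1, fun h => hne (h1.trans h.symm), h2, h3⟩
    · exact Or.inr ⟨h1, fun h => hne (h.trans h1.symm), h2, h3⟩
  have hmaps : ∀ ed ∈ (mctr G x y).edgeFinset, f ed ∈ G.edgeFinset.erase s(x, y) := by
    intro ed hed
    rw [SimpleGraph.mem_edgeFinset] at hed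
    induction ed using Sym2.ind with
    | _ u w =>
      by_cases hmem : s(u, w) ∈ G.edgeSet
      · rw [Finset.mem_erase]
        constructor
        · intro hcontra
          simp only [hf, if_pos hmem] at hcontra
          rw [Sym2.eq_iff] at hcontra
          have := mctr_y_not_in_edge hxy.ne hed
          rw [Sym2.mem_iff] at this
          rcases hcontra with ⟨h1, h2⟩ | ⟨h1, h2⟩
          · exact this (Or.inr h2.symm)
          · exact this (Or.inl h1.symm)
        · rw [SimpleGraph.mem_edgeFinset]
          simpa [hf, hmem] using hmem
      · rw [SimpleGraph.mem_edgeSet] at hed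
        rcases hform u w hed hmem with ⟨h1, h2, h3, h4⟩ | ⟨h1, h2, h3, h4⟩
        · subst h1
          have : f s(u, w) = s(y, w) := by
            rw [hf]
            simp only [if_neg hmem]
            show s(g u, g w) = _
            rw [hg]
            simp [h2]
          rw [this, Finset.mem_erase]
          refine ⟨?_, SimpleGraph.mem_edgeFinset.2 h4⟩
          rw [Ne, Sym2.eq_iff]
          rintro (⟨h5, h6⟩ | ⟨h5, h6⟩)
          · exact hxy.ne' h5
          · exact h2 h6
        · subst h1
          have : f s(u, w) = s(u, y) := by
            rw [hf]
            simp only [if_neg hmem]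
            show s(g u, g w) = _
            rw [hg]
            simp [h2]
          rw [this, Finset.mem_erase]
          refine ⟨?_, SimpleGraph.mem_edgeFinset.2 (by exact h4.symm)⟩
          rw [Ne, Sym2.eq_iff]
          rintro (⟨h5, h6⟩ | ⟨h5, h6⟩)
          · exact h2 h5
          · exact hxy.ne h6.symm
  set h : V → V := fun v => if v = y then x else v with hh
  have hkey : ∀ ed ∈ (mctr G x y).edgeFinset, ed ∉ G.edgeSet →
      y ∈ f ed ∧ Sym2.map h (f ed) = ed := by
    intro ed hed hno
    rw [SimpleGraph.mem_edgeFinset] at hed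
    induction ed using Sym2.ind with
    | _ u w =>
      rw [SimpleGraph.mem_edgeSet] at hed
      rcases hform u w hed hno with ⟨h1, h2, h3, h4⟩ | ⟨h1, h2, h3, h4⟩
      · subst h1
        have hfe : f s(u, w) = s(y, w) := by
          rw [hf]
          simp only [if_neg hno]
          show s(g u, g w) = _
          rw [hg]
          simp [h2]
        rw [hfe]
        refine ⟨by rw [Sym2.mem_iff]; exact Or.inl rfl, ?_⟩
        show s(h y, h w) = _
        rw [hh]
        simp [h3]
      · subst h1
        have hfe : f s(u, w) = s(u, y) := by
          rw [hf]
          simp only [if_neg hno]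
          show s(g u, g w) = _
          rw [hg]
          simp [h2]
        rw [hfe]
        refine ⟨by rw [Sym2.mem_iff]; exact Or.inr rfl, ?_⟩
        show s(h u, h y) = _
        rw [hh]
        simp [h3]
  have hid : ∀ ed ∈ (mctr G x y).edgeFinset, ed ∈ G.edgeSet → f ed = ed ∧ y ∉ f ed := by
    intro ed hed hmem
    have : f ed = ed := by simp only [hf, if_pos hmem]
    refine ⟨this, ?_⟩
    rw [this]
    exact mctr_y_not_in_edge hxy.ne (SimpleGraph.mem_edgeFinset.1 hed)
  have hinj : ∀ ed₁ ∈ (mctr G x y).edgeFinset, ∀ ed₂ ∈ (mctr G x y).edgeFinset,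
      f ed₁ = f ed₂ → ed₁ = ed₂ := by
    intro ed₁ hed₁ ed₂ hed₂ heq
    by_cases hm1 : ed₁ ∈ G.edgeSet <;> by_cases hm2 : ed₂ ∈ G.edgeSet
    · rw [← (hid ed₁ hed₁ hm1).1, ← (hid ed₂ hed₂ hm2).1, heq]
    · exact absurd (heq ▸ (hkey ed₂ hed₂ hm2).1) (hid ed₁ hed₁ hm1).2
    · exact absurd (heq ▸ (hkey ed₁ hed₁ hm1).1) (hid ed₂ hed₂ hm2).2
    · rw [← (hkey ed₁ hed₁ hm1).2, ← (hkey ed₂ hed₂ hm2).2, heq]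
  calc (mctr G x y).edgeFinset.card
      ≤ (G.edgeFinset.erase s(x, y)).card := by
        apply Finset.card_le_card_of_injOn f hmaps
        intro a ha b hb hab
        exact hinj a (Finset.mem_coe.1 ha) b (Finset.mem_coe.1 hb) hab
    _ < G.edgeFinset.card :=
        Finset.card_erase_lt_of_mem (SimpleGraph.mem_edgeFinset.2 hxy)

lemma end_not_mem_takeUntil {G : SimpleGraph V} {a c : V} {p : G.Walk a c}
    (hp : p.IsPath) {w : V} (h : w ∈ p.support) (hw : w ≠ c) :
    c ∉ (p.takeUntil w h).support := by
  classical
  intro hc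
  have hspec := p.take_spec h
  have hnd : p.support.Nodup := hp.support_nodup
  rw [← hspec, SimpleGraph.Walk.support_append] at hnd
  have hc2 : c ∈ (p.dropUntil w h).support.tail := by
    have hce : c ∈ (p.dropUntil w h).support := (p.dropUntil w h).end_mem_support
    rw [SimpleGraph.Walk.support_eq_cons] at hce
    rcases List.mem_cons.1 hce with h' | h'
    · exact absurd h'.symm hw
    · exact h'
  exact (List.disjoint_of_nodup_append hnd) hc hc2

lemma start_not_mem_dropUntil_tail {G : SimpleGraph V} {c b : V} {q : G.Walk c b}
    (hq : q.IsPath) {w : V} (h : w ∈ q.support) (hw : w ≠ c) :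
    c ∉ (q.dropUntil w h).support := by
  classical
  intro hc
  have hspec := q.take_spec h
  have hnd : q.support.Nodup := hq.support_nodup
  rw [← hspec, SimpleGraph.Walk.support_append] at hnd
  have hc1 : c ∈ (q.takeUntil w h).support := (q.takeUntil w h).start_mem_support
  have hc2 : c ∈ (q.dropUntil w h).support.tail := by
    rw [SimpleGraph.Walk.support_eq_cons] at hc
    rcases List.mem_cons.1 hc with h' | h'
    · exact absurd h'.symm hw
    · exact h'
  exact (List.disjoint_of_nodup_append hnd) hc1 hc2

/-- Gluing two families of disjoint paths at a separator of exactly the right size. -/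
lemma mpaths_glue {G G' : SimpleGraph V} (hle : G' ≤ G) {A B S : Finset V} {k : ℕ}
    (hSsep : MSep G A B S) (hScard : S.card = k)
    (h1 : MPaths G' A S k) (h2 : MPaths G' S B k) : MPaths G A B k := by
  classical
  obtain ⟨e1, P, hP, hPd⟩ := h1
  obtain ⟨e2, Q, hQ, hQd⟩ := h2
  -- endpoint maps
  have hsinj : Function.Injective (fun i => (e1 i).2) := by
    intro i j hij
    simp only at hij
    by_contra hne
    apply hPd i j hne (e1 i).2 (P i).end_mem_support
    rw [hij]
    exact (P j).end_mem_support
  have htinj : Function.Injective (fun j => (e2 j).1) := by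
    intro i j hij
    simp only at hij
    by_contra hne
    apply hQd i j hne (e2 i).1 (Q i).start_mem_support
    rw [hij]
    exact (Q j).start_mem_support
  -- the ends of the P's exhaust S
  have himg : Finset.univ.image (fun i => (e1 i).2) = S := by
    apply Finset.eq_of_subset_of_card_le
    · intro z hz
      obtain ⟨i, _, rfl⟩ := Finset.mem_image.1 hz
      exact (hP i).2.2
    · rw [Finset.card_image_of_injective _ hsinj, Finset.card_univ, Fintype.card_fin, hScard]
  -- matching
  have hmatch : ∀ j, ∃ i, (e1 i).2 = (e2 j).1 := by
    intro j
    have : (e2 j).1 ∈ Finset.univ.image (fun i => (e1 i).2) := himg ▸ (hQ j).2.1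
    obtain ⟨i, _, hi⟩ := Finset.mem_image.1 this
    exact ⟨i, hi⟩
  choose σ hσ using hmatch
  have hσinj : Function.Injective σ := by
    intro i j hij
    apply htinj
    simp only
    rw [← hσ i, ← hσ j, hij]
  -- paths meet S only at their S-endpoint
  have hPS : ∀ i w, w ∈ (P i).support → w ∈ S → w = (e1 i).2 := by
    intro i w hw hwS
    obtain ⟨i', _, hi'⟩ := Finset.mem_image.1 (himg ▸ hwS)
    by_cases hii : i' = i
    · rw [← hii]; exact hi'.symm
    · exfalso
      apply hPd i i' (fun h => hii h.symm) w hw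
      rw [← hi']
      exact (P i').end_mem_support
  have htimg : Finset.univ.image (fun j => (e2 j).1) = S := by
    apply Finset.eq_of_subset_of_card_le
    · intro z hz
      obtain ⟨j, _, rfl⟩ := Finset.mem_image.1 hz
      exact (hQ j).2.1
    · rw [Finset.card_image_of_injective _ htinj, Finset.card_univ, Fintype.card_fin, hScard]
  have hQS : ∀ j w, w ∈ (Q j).support → w ∈ S → w = (e2 j).1 := by
    intro j w hw hwS
    obtain ⟨j', _, hj'⟩ := Finset.mem_image.1 (htimg ▸ hwS)
    by_cases hjj : j' = j
    · rw [← hjj]; exact hj'.symm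
    · exfalso
      apply hQd j j' (fun h => hjj h.symm) w hw
      rw [← hj']
      exact (Q j').start_mem_support
  -- crossing lemma
  have hcross : ∀ i j w, w ∈ (P i).support → w ∈ (Q j).support →
      w = (e1 i).2 ∧ w = (e2 j).1 := by
    intro i j w hwP hwQ
    by_cases hwS : w ∈ S
    · exact ⟨hPS i w hwP hwS, hQS j w hwQ hwS⟩
    · exfalso
      have hwP2 : w ≠ (e1 i).2 := fun h => hwS (h ▸ (hP i).2.2)
      have hwQ2 : w ≠ (e2 j).1 := fun h => hwS (h ▸ (hQ j).2.1)
      set W : G'.Walk (e1 i).1 (e2 j).2 :=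
        ((P i).takeUntil w hwP).append ((Q j).dropUntil w hwQ) with hW
      have htr : ∀ ed ∈ W.edges, ed ∈ G.edgeSet :=
        fun ed hed => (SimpleGraph.edgeSet_subset_edgeSet.2 hle) (W.edges_subset_edgeSet hed)
      obtain ⟨z, hzS, hzW⟩ := hSsep (hP i).2.1 (hQ j).2.2 (W.transfer G htr)
      rw [SimpleGraph.Walk.support_transfer, hW, SimpleGraph.Walk.support_append] at hzW
      rcases List.mem_append.1 hzW with h' | h'
      · have hz2 : z = (e1 i).2 :=
          hPS i z ((P i).support_takeUntil_subset hwP h') hzS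
        exact end_not_mem_takeUntil (hP i).1 hwP hwP2 (hz2 ▸ h')
      · have h'' : z ∈ ((Q j).dropUntil w hwQ).support := List.mem_of_mem_tail h'
        have hz2 : z = (e2 j).1 := by
          have hsub := SimpleGraph.Walk.support_dropUntil_subset (Q j) hwQ
          exact hQS j z (hsub h'') hzS
        exact start_not_mem_dropUntil_tail (hQ j).1 hwQ hwQ2 (hz2 ▸ h'')
  -- assemble the glued paths
  have hRfam : ∀ j : Fin k, ∃ q : G.Walk (e1 (σ j)).1 (e2 j).2, q.IsPath ∧
      (∀ w ∈ q.support, w ∈ (P (σ j)).support ∨ w ∈ (Q j).support) := by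
    intro j
    set R : G'.Walk (e1 (σ j)).1 (e2 j).2 :=
      (P (σ j)).append ((Q j).copy (hσ j).symm rfl) with hR
    have htr : ∀ ed ∈ R.edges, ed ∈ G.edgeSet :=
      fun ed hed => (SimpleGraph.edgeSet_subset_edgeSet.2 hle) (R.edges_subset_edgeSet hed)
    refine ⟨R.transfer G htr, ?_, ?_⟩
    · rw [SimpleGraph.Walk.isPath_def, SimpleGraph.Walk.support_transfer, hR,
        SimpleGraph.Walk.support_append, SimpleGraph.Walk.support_copy]
      rw [List.nodup_append]
      refine ⟨(hP (σ j)).1.support_nodup, ?_, ?_⟩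
      · have := (hQ j).1.support_nodup
        rw [SimpleGraph.Walk.support_eq_cons] at this
        exact this.of_cons
      · intro z hz1 b hz2 hzb; subst hzb
        have hz2' : z ∈ (Q j).support := List.mem_of_mem_tail hz2
        have := (hcross (σ j) j z hz1 hz2').2
        subst this
        have hnd := (hQ j).1.support_nodup
        rw [SimpleGraph.Walk.support_eq_cons] at hnd
        exact (List.nodup_cons.1 hnd).1 hz2
    · intro w hw
      rw [SimpleGraph.Walk.support_transfer, hR, SimpleGraph.Walk.support_append,
        SimpleGraph.Walk.support_copy] at hw
      rcases List.mem_append.1 hw with h' | h'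
      · exact Or.inl h'
      · exact Or.inr (List.mem_of_mem_tail h')
  choose R hRpath hRsup using hRfam
  refine ⟨fun j => ((e1 (σ j)).1, (e2 j).2), R, ?_, ?_⟩
  · exact fun j => ⟨hRpath j, (hP (σ j)).2.1, (hQ j).2.2⟩
  · intro i j hij w hwi hwj
    rcases hRsup i w hwi with h1 | h1 <;> rcases hRsup j w hwj with h2 | h2
    · exact hPd (σ i) (σ j) (fun h => hij (hσinj h)) w h1 h2
    · obtain ⟨hc1, hc2⟩ := hcross (σ i) j w h1 h2
      have : (e2 i).1 = (e2 j).1 := by rw [← hσ i, ← hc1, hc2]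
      exact hij (htinj this)
    · obtain ⟨hc1, hc2⟩ := hcross (σ j) i w h2 h1
      have : (e2 j).1 = (e2 i).1 := by rw [← hσ j, ← hc1, hc2]
      exact hij (htinj this).symm
    · exact hQd i j hij w h1 h2

lemma mpaths_of_no_edges {G : SimpleGraph V} (hE : ∀ u w : V, ¬ G.Adj u w)
    {A B : Finset V} {k : ℕ} (hsep : ∀ S, MSep G A B S → k ≤ S.card) :
    MPaths G A B k := by
  apply mpaths_of_inter
  apply hsep
  intro a ha b hb p
  cases p with
  | nil => exact ⟨a, Finset.mem_inter.2 ⟨ha, hb⟩, by simp⟩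
  | cons h _ => exact absurd h (hE _ _)

/-- **Menger's theorem** (hard direction, vertex version for sets). -/
theorem mmenger (G : SimpleGraph V) (A B : Finset V) (k : ℕ)
    (hsep : ∀ S, MSep G A B S → k ≤ S.card) : MPaths G A B k := by
  classical
  suffices H : ∀ (n : ℕ) (G : SimpleGraph V) (A B : Finset V) (k : ℕ),
      G.edgeFinset.card ≤ n → (∀ S, MSep G A B S → k ≤ S.card) → MPaths G A B k from
    H G.edgeFinset.card G A B k le_rfl hsep
  intro n
  induction n with
  | zero =>
    intro G A B k hcard hsep
    refine mpaths_of_no_edges (fun u w h => ?_) hsep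
    have : s(u, w) ∈ G.edgeFinset := SimpleGraph.mem_edgeFinset.2 h
    have := Finset.card_pos.2 ⟨_, this⟩
    omega
  | succ n ih =>
    intro G A B k hcard hsep
    by_cases hE : ∃ x y, G.Adj x y
    · obtain ⟨x, y, hxy⟩ := hE
      by_cases hA2 : ∀ S, MSep (mctr G x y) (mrepl x y A) (mrepl x y B) S → k ≤ S.card
      · refine mpaths_of_mctr hxy (ih _ _ _ _ ?_ hA2)
        have := mctr_edge_lt (G := G) hxy
        omega
      · push_neg at hA2
        obtain ⟨S₂, hS₂sep, hS₂card⟩ := hA2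
        -- erase y; still a separator in the contraction
        set S₂' := S₂.erase y with hS₂'
        have hS₂'sep := msep_mctr_erase_y hxy hS₂sep
        have hS₂'card : S₂'.card < k := lt_of_le_of_lt (Finset.card_erase_le) hS₂card
        by_cases hxS : x ∈ S₂'
        · -- main case
          set S := insert y S₂' with hS
          have hSsep : MSep G A B S := msep_of_mctr_x hxy hS₂'sep
          have hyS : y ∈ S := Finset.mem_insert_self _ _
          have hxS' : x ∈ S := Finset.mem_insert_of_mem hxS
          have hSk : S.card = k := by
            have h1 : k ≤ S.card := hsep S hSsep
            have h2 : S.card ≤ S₂'.card + 1 := Finset.card_insert_le _ _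
            omega
          have hdelcard : (G.deleteEdges {s(x, y)}).edgeFinset.card ≤ n := by
            have := mdel_edge_lt (G := G) hxy
            omega
          have hP1 : MPaths (G.deleteEdges {s(x, y)}) A S k := by
            refine ih _ _ _ _ (by convert hdelcard) ?_
            intro T hT
            exact hsep T (msep_left hxy hxS' hyS hSsep hT)
          have hP2 : MPaths (G.deleteEdges {s(x, y)}) S B k := by
            refine ih _ _ _ _ (by convert hdelcard) ?_
            intro T hT
            have : MSep G B A T :=
              msep_left hxy hxS' hyS hSsep.symm (MSep.symm hT)
            exact hsep T this.symm
          exact mpaths_glue (SimpleGraph.deleteEdges_le _) hSsep hSk hP1 hP2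
        · -- x ∉ S₂' : contradiction, S₂' itself separates A from B in G
          exfalso
          have hyS₂' : y ∉ S₂' := Finset.notMem_erase _ _
          have : MSep G A B S₂' := msep_of_mctr_noxy hxy hS₂'sep hxS hyS₂'
          have := hsep S₂' this
          omega
    · push_neg at hE
      exact mpaths_of_no_edges hE hsep

/-- Vertices reachable from `A \ S` by walks avoiding `S`. -/
noncomputable def reachAvoid (G : SimpleGraph V) (A S : Finset V) : Finset V :=
  Finset.univ.filter fun v => ∃ a ∈ A \ S, ∃ p : G.Walk a v, ∀ w ∈ p.support, w ∉ S

lemma sdiff_subset_reachAvoid {G : SimpleGraph V} (A S : Finset V) :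
    A \ S ⊆ reachAvoid G A S := by
  intro a ha
  refine Finset.mem_filter.2 ⟨Finset.mem_univ _, a, ha, SimpleGraph.Walk.nil, ?_⟩
  intro w hw
  rw [SimpleGraph.Walk.support_nil, List.mem_singleton] at hw
  exact hw ▸ (Finset.mem_sdiff.1 ha).2

lemma extNbhd_reachAvoid_subset {G : SimpleGraph V} (A S : Finset V) :
    extNbhd G (reachAvoid G A S) ⊆ S := by
  intro v hv
  obtain ⟨-, hvC, u, huC, hadj⟩ := Finset.mem_filter.1 hv
  by_contra hvS
  apply hvC
  obtain ⟨-, a, ha, p, hp⟩ := Finset.mem_filter.1 huC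
  refine Finset.mem_filter.2 ⟨Finset.mem_univ _, a, ha, p.concat hadj, ?_⟩
  intro w hw
  rw [SimpleGraph.Walk.support_concat] at hw
  rcases List.mem_append.1 hw with h' | h'
  · exact hp w h'
  · rw [List.mem_singleton] at h'
    exact h' ▸ hvS

lemma reachAvoid_disjoint {G : SimpleGraph V} {A B S : Finset V}
    (hS : MSep G A B S) : Disjoint (reachAvoid G A S) (reachAvoid G B S) := by
  rw [Finset.disjoint_left]
  intro v hvA hvB
  obtain ⟨-, a, ha, p, hp⟩ := Finset.mem_filter.1 hvA
  obtain ⟨-, b, hb, q, hq⟩ := Finset.mem_filter.1 hvB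
  obtain ⟨s, hsS, hsp⟩ := hS (Finset.mem_sdiff.1 ha).1 (Finset.mem_sdiff.1 hb).1
    (p.append q.reverse)
  rw [SimpleGraph.Walk.support_append] at hsp
  rcases List.mem_append.1 hsp with h' | h'
  · exact hp s h' hsS
  · have : s ∈ q.reverse.support := List.mem_of_mem_tail h'
    rw [SimpleGraph.Walk.support_reverse] at this
    exact hq s (List.mem_reverse.1 this) hsS

lemma sep_card_bound_aux {G : SimpleGraph V} {α : ℝ} (hα : 0 < α)
    (hG : IsAlphaExpander G α) {A B : Finset V} {t : ℝ} (ht : 0 < t)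
    (hA : t ≤ A.card) (S : Finset V) (hS : MSep G A B S)
    (hsmall : 2 * (reachAvoid G A S).card ≤ Fintype.card V)
    (hcard : (S.card : ℝ) < t) :
    t * α / (1 + α) ≤ S.card := by
  set C := reachAvoid G A S with hC
  have h1 : α * C.card ≤ ((extNbhd G C).card : ℝ) := by
    apply hG
    omega
  have h2 : ((extNbhd G C).card : ℝ) ≤ S.card := by
    exact_mod_cast Nat.cast_le.2 (Finset.card_le_card (extNbhd_reachAvoid_subset A S))
  have h3 : (A.card : ℝ) ≤ (A \ S).card + S.card := by
    have : A ⊆ (A \ S) ∪ S := by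
      intro a ha
      by_cases h : a ∈ S
      · exact Finset.mem_union_right _ h
      · exact Finset.mem_union_left _ (Finset.mem_sdiff.2 ⟨ha, h⟩)
    calc (A.card : ℝ) ≤ (((A \ S) ∪ S).card : ℝ) := by
          exact_mod_cast Finset.card_le_card this
      _ ≤ (A \ S).card + S.card := by exact_mod_cast Finset.card_union_le _ _
  have h4 : ((A \ S).card : ℝ) ≤ C.card := by
    exact_mod_cast Finset.card_le_card (sdiff_subset_reachAvoid A S)
  have h5 : t - S.card ≤ (C.card : ℝ) := by linarith
  have h6 : α * (t - S.card) ≤ α * C.card := by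
    apply mul_le_mul_of_nonneg_left h5 hα.le
  rw [div_le_iff₀ (by positivity : (0:ℝ) < 1 + α)]
  nlinarith

lemma sep_card_bound {G : SimpleGraph V} {α : ℝ} (hα : 0 < α)
    (hG : IsAlphaExpander G α) {A B : Finset V} {t : ℝ} (ht : 0 < t)
    (hA : t ≤ A.card) (hB : t ≤ B.card) (S : Finset V) (hS : MSep G A B S) :
    t * α / (1 + α) ≤ S.card := by
  by_cases hcard : t ≤ (S.card : ℝ)
  · have h0 : t * α / (1 + α) ≤ t := by
      rw [div_le_iff₀ (by positivity : (0:ℝ) < 1 + α)]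
      nlinarith
    linarith
  · push_neg at hcard
    have hdisj := reachAvoid_disjoint hS
    have hsum : (reachAvoid G A S).card + (reachAvoid G B S).card ≤ Fintype.card V := by
      rw [← Finset.card_union_of_disjoint hdisj]
      exact Finset.card_le_card (Finset.subset_univ _) |>.trans (by simp)
    rcases le_total ((reachAvoid G A S).card) ((reachAvoid G B S).card) with h | h
    · exact sep_card_bound_aux hα hG ht hA S hS (by omega) hcard
    · exact sep_card_bound_aux hα hG ht hB S hS.symm (by omega) hcard


end MengerDev

/-- an α-expander contains at least `tα/(1+α)` vertex-disjoint paths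
between any two vertex sets of size at least `t`. -/
theorem many_disjoint_paths {V : Type*} [Fintype V] (G : SimpleGraph V) (α : ℝ)
    (hα : 0 < α) (hG : IsAlphaExpander G α) (A B : Finset V) (t : ℝ) (ht : 0 < t)
    (hA : t ≤ A.card) (hB : t ≤ B.card) :
    ∃ (m : ℕ) (e : Fin m → V × V) (p : ∀ i, G.Walk (e i).1 (e i).2),
      t * α / (1 + α) ≤ m ∧
      (∀ i, (p i).IsPath ∧ (e i).1 ∈ A ∧ (e i).2 ∈ B) ∧
      (∀ i j, i ≠ j → ∀ x, x ∈ (p i).support → x ∉ (p j).support) := by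
  set m := ⌈t * α / (1 + α)⌉₊ with hm
  have hsepk : ∀ S, MSep G A B S → m ≤ S.card := by
    intro S hSsep
    rw [hm]
    exact Nat.ceil_le.2 (sep_card_bound hα hG ht hA hB S hSsep)
  obtain ⟨e, p, h1, h2⟩ := mmenger G A B m hsepk
  exact ⟨m, e, p, Nat.le_ceil _, h1, h2⟩
end

section
/- Let G = (V,E) be a (k,α)-expander on n vertices, let C > 0, and let V₁,...,V_r be disjoint non-empty vertex sets each of size at most C with V = V₁ ∪ ⋯ ∪ V_r. The graph G' obtained by contracting each V_i to a single vertex (with v_i adjacent to v_j in G' iff there is an edge of G between V_i and V_j) has r ≥ n/C vertices and is a (k/C, α/C)-expander. -/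
open Finset SimpleGraph
open scoped Classical

/-- contracting disjoint sets of size at most `C` covering a
`(k,α)`-expander yields a `(k/C, α/C)`-expander on at least `n/C` vertices. -/
theorem contraction_expander {V : Type*} [Fintype V] (G : SimpleGraph V) (k α C : ℝ)
    (hC : 0 < C) (hG : IsKExpander G k α) (r : ℕ) (P : Fin r → Finset V)
    (hne : ∀ i, (P i).Nonempty) (hsize : ∀ i, ((P i).card : ℝ) ≤ C)
    (hdisj : ∀ i j, i ≠ j → Disjoint (P i) (P j))
    (hcover : ∀ v : V, ∃ i, v ∈ P i)
    (G' : SimpleGraph (Fin r))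
    (hG' : ∀ i j, G'.Adj i j ↔ i ≠ j ∧ ∃ u ∈ P i, ∃ w ∈ P j, G.Adj u w) :
    (Fintype.card V : ℝ) / C ≤ r ∧ IsKExpander G' (k / C) (α / C) := by
  have hsum : ∀ S : Finset (Fin r),
      ((S.biUnion P).card : ℝ) ≤ C * S.card := by
    intro S
    calc ((S.biUnion P).card : ℝ) ≤ ∑ i ∈ S, ((P i).card : ℝ) := by
          exact_mod_cast Finset.card_biUnion_le
      _ ≤ ∑ i ∈ S, C := Finset.sum_le_sum fun i _ => hsize i
      _ = C * S.card := by rw [Finset.sum_const, nsmul_eq_mul, mul_comm]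
  constructor
  · rw [div_le_iff₀ hC]
    have hsub : (Finset.univ : Finset V) ⊆ (Finset.univ : Finset (Fin r)).biUnion P := by
      intro v _
      obtain ⟨i, hi⟩ := hcover v
      exact Finset.mem_biUnion.2 ⟨i, Finset.mem_univ i, hi⟩
    have h1 : ((Finset.univ : Finset V).card : ℝ) ≤ C * (Finset.univ : Finset (Fin r)).card := by
      calc ((Finset.univ : Finset V).card : ℝ)
          ≤ (((Finset.univ : Finset (Fin r)).biUnion P).card : ℝ) := by
            exact_mod_cast Finset.card_le_card hsub
        _ ≤ C * (Finset.univ : Finset (Fin r)).card := hsum _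
    simpa [Fintype.card_fin, mul_comm] using h1
  · intro U hU
    rcases le_or_gt α 0 with hα | hα
    · have : α / C * U.card ≤ 0 := by
        apply mul_nonpos_of_nonpos_of_nonneg
        · exact div_nonpos_of_nonpos_of_nonneg hα hC.le
        · positivity
      exact this.trans (by positivity)
    set W := U.biUnion P with hW
    have hWk : (W.card : ℝ) ≤ k := by
      calc (W.card : ℝ) ≤ C * U.card := hsum U
        _ ≤ C * (k / C) := by
            exact mul_le_mul_of_nonneg_left hU hC.le
        _ = k := by field_simp
    have hUW : (U.card : ℝ) ≤ W.card := by
      have : U.card ≤ W.card := by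
        rw [hW, Finset.card_biUnion (fun i _ j _ hij => hdisj i j hij)]
        calc U.card = ∑ _i ∈ U, 1 := by simp
          _ ≤ ∑ i ∈ U, (P i).card := Finset.sum_le_sum fun i _ =>
              Finset.card_pos.2 (hne i)
      exact_mod_cast this
    have hexp := hG W hWk
    -- extNbhd G W ⊆ (extNbhd G' U).biUnion P
    have hsub : extNbhd G W ⊆ (extNbhd G' U).biUnion P := by
      intro v hv
      simp only [extNbhd, Finset.mem_filter, Finset.mem_univ, true_and] at hv
      obtain ⟨hvW, u, huW, hadj⟩ := hv
      obtain ⟨j, hj⟩ := hcover v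
      obtain ⟨i, hiU, hui⟩ := Finset.mem_biUnion.1 huW
      have hjU : j ∉ U := fun hjU => hvW (Finset.mem_biUnion.2 ⟨j, hjU, hj⟩)
      have hij : i ≠ j := fun h => hjU (h ▸ hiU)
      refine Finset.mem_biUnion.2 ⟨j, ?_, hj⟩
      simp only [extNbhd, Finset.mem_filter, Finset.mem_univ, true_and]
      exact ⟨hjU, i, hiU, (hG' i j).2 ⟨hij, u, hui, v, hj, hadj⟩⟩
    have hcard : ((extNbhd G W).card : ℝ) ≤ C * (extNbhd G' U).card :=
      le_trans (by exact_mod_cast Finset.card_le_card hsub) (hsum _)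
    rw [div_mul_eq_mul_div, div_le_iff₀ hC]
    calc α * U.card ≤ α * W.card := mul_le_mul_of_nonneg_left hUW hα.le
      _ ≤ ((extNbhd G W).card : ℝ) := hexp
      _ ≤ C * (extNbhd G' U).card := hcard
      _ = (extNbhd G' U).card * C := mul_comm _ _
end

section
/- Let k and ℓ be positive integers and let G = (V,E) be a graph on more than k vertices in which every vertex set W of size exactly k satisfies |N_G(W)| ≥ ℓ. If v ∈ V is a vertex whose connected component contains at least k vertices, then G contains a path of length ℓ (with ℓ edges) starting at v. -/
open Finset SimpleGraph
open scoped Classical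

/-- A walk starting in a "closed" set ends in it. -/
lemma walk_end_mem_closed {V : Type*} {G : SimpleGraph V} {S : Set V}
    (hS : ∀ a ∈ S, ∀ b, G.Adj a b → b ∈ S) :
    ∀ {a b : V}, G.Walk a b → a ∈ S → b ∈ S := by
  intro a b p
  induction p with
  | nil => exact id
  | cons h q ih => exact fun ha => ih (hS _ ha _ h)

/-- From a path (written backwards, ending at `v`) of length at least `ℓ` one can
extract a path starting at `v` of length exactly `ℓ`. -/
lemma shorten_path {V : Type*} {G : SimpleGraph V} (ℓ : ℕ) :
    ∀ {w v : V} (r : G.Walk w v), r.IsPath → ℓ ≤ r.length →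
      ∃ (w' : V) (q : G.Walk v w'), q.IsPath ∧ q.length = ℓ := by
  intro w v r
  induction r with
  | nil =>
      intro _ hl
      exact ⟨_, SimpleGraph.Walk.nil, SimpleGraph.Walk.IsPath.nil,
        by simpa using (Nat.le_zero.mp hl).symm⟩
  | @cons a b c h r ih =>
      intro hp hl
      rcases eq_or_lt_of_le hl with heq | hlt
      · refine ⟨a, (SimpleGraph.Walk.cons h r).reverse, hp.reverse, ?_⟩
        rw [SimpleGraph.Walk.length_reverse]
        exact heq.symm
      · exact ih hp.of_cons (by simpa using Nat.lt_succ_iff.mp (by simpa using hlt))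

/-- The key DFS invariant step: `U` is a set of "finished" vertices, `r` is the
current active path (from the current vertex `x` back to the root `v`), all
neighbors of `U` lie in `U` or on the path. Then a path of length `ℓ` from `v`
exists. -/
lemma dfs_aux {V : Type*} [Fintype V] (G : SimpleGraph V) (k ℓ : ℕ)
    (hk : 0 < k) (hℓ : 0 < ℓ)
    (hexp : ∀ W : Finset V, W.card = k → ℓ ≤ (extNbhd G W).card)
    (v : V) (hcomp : k ≤ (Finset.univ.filter fun w => G.Reachable v w).card) :
    ∀ (n : ℕ) (U : Finset V) (x : V) (r : G.Walk x v),
      r.IsPath → (∀ u ∈ U, u ∉ r.support) → U.card ≤ k →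
      (∀ u ∈ U, ∀ w, G.Adj u w → w ∈ U ∨ w ∈ r.support) →
      (k - U.card) * (Fintype.card V + 1) + (Fintype.card V + 1 - r.support.length) ≤ n →
      ∃ (w : V) (p : G.Walk v w), p.IsPath ∧ p.length = ℓ := by
  intro n
  induction n with
  | zero =>
      intro U x r hr hdisj hUk hcl hmeas
      exfalso
      have hlen : r.support.length ≤ Fintype.card V := (hr.support_nodup).length_le_card
      omega
  | succ n ih =>
      intro U x r hr hdisj hUk hcl hmeas
      have hsuplen : r.support.length ≤ Fintype.card V := (hr.support_nodup).length_le_card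
      have hsupcard : r.support.toFinset.card = r.support.length :=
        List.toFinset_card_of_nodup hr.support_nodup
      by_cases hUkeq : U.card = k
      · -- "done" case : U has size exactly k, expansion forces the path to be long
        have hN : ℓ ≤ (extNbhd G U).card := hexp U hUkeq
        have hNsub : extNbhd G U ⊆ r.support.toFinset := by
          intro b hb
          simp only [extNbhd, Finset.mem_filter, Finset.mem_univ, true_and] at hb
          obtain ⟨hbU, u, huU, hadj⟩ := hb
          rcases hcl u huU b hadj with h | h
          · exact absurd h hbU
          · simpa using h
        by_cases hlong : ℓ ≤ r.length
        · exact shorten_path ℓ r hr hlong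
        · -- tight case: the path has length exactly ℓ - 1; extend it by one edge into U
          push_neg at hlong
          have hslen : r.support.length = r.length + 1 := SimpleGraph.Walk.length_support r
          have hcardle : r.support.toFinset.card ≤ (extNbhd G U).card := by omega
          have heq : extNbhd G U = r.support.toFinset :=
            Finset.eq_of_subset_of_card_le hNsub hcardle
          have hx : x ∈ extNbhd G U := by
            rw [heq]; simpa using r.start_mem_support
          simp only [extNbhd, Finset.mem_filter, Finset.mem_univ, true_and] at hx
          obtain ⟨hxU, u, huU, hadj⟩ := hx
          have hxlen : ℓ = r.length + 1 := by
            have h1 : ℓ ≤ r.support.toFinset.card := le_trans hN (le_of_eq (by rw [heq]))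
            omega
          refine ⟨u, (SimpleGraph.Walk.cons hadj r).reverse, ?_, ?_⟩
          · rw [SimpleGraph.Walk.isPath_reverse_iff]
            exact hr.cons (hdisj u huU)
          · rw [SimpleGraph.Walk.length_reverse, SimpleGraph.Walk.length_cons, hxlen]
      · have hUlt : U.card < k := lt_of_le_of_ne hUk hUkeq
        by_cases hext : ∃ w, G.Adj x w ∧ w ∉ U ∧ w ∉ r.support
        · -- extend the active path
          obtain ⟨w, hadj, hwU, hws⟩ := hext
          refine ih U w (SimpleGraph.Walk.cons hadj.symm r) (hr.cons hws) ?_ hUk ?_ ?_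
          · intro u hu
            simp only [SimpleGraph.Walk.support_cons, List.mem_cons]
            push_neg
            exact ⟨fun h => hwU (h ▸ hu), hdisj u hu⟩
          · intro u hu w' hadj'
            rcases hcl u hu w' hadj' with h | h
            · exact Or.inl h
            · exact Or.inr (by simp [SimpleGraph.Walk.support_cons, h])
          · have : (SimpleGraph.Walk.cons hadj.symm r).support.length
                = r.support.length + 1 := by
              simp [SimpleGraph.Walk.support_cons]
            rw [this]
            have hM : Fintype.card V + 1 ≤ (k - U.card) * (Fintype.card V + 1) :=
              Nat.le_mul_of_pos_left _ (by omega)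
            omega
        · push_neg at hext
          have hxnbr : ∀ w, G.Adj x w → w ∈ U ∨ w ∈ r.support := by
            intro w hadj
            by_cases h1 : w ∈ U
            · exact Or.inl h1
            · exact Or.inr (hext w hadj h1)
          cases r with
          | nil =>
              -- stuck at the root: the whole component is U ∪ {v}, contradiction
              exfalso
              set S : Finset V := insert v U with hS
              have hvU : v ∉ U := by
                have := hdisj
                intro hv
                exact (hdisj v hv) (by simp)
              have hScard : S.card = U.card + 1 := Finset.card_insert_of_notMem hvU
              have hclosed : ∀ a ∈ (S : Set V), ∀ b, G.Adj a b → b ∈ (S : Set V) := by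
                intro a ha b hadj
                simp only [hS, Finset.coe_insert, Set.mem_insert_iff, Finset.mem_coe] at ha ⊢
                rcases ha with rfl | haU
                · rcases hxnbr b hadj with h | h
                  · exact Or.inr h
                  · simp only [SimpleGraph.Walk.support_nil, List.mem_singleton] at h
                    exact absurd h hadj.ne'
                · rcases hcl a haU b hadj with h | h
                  · exact Or.inr h
                  · simp only [SimpleGraph.Walk.support_nil, List.mem_singleton] at h
                    exact Or.inl h
              have hcompsub : (Finset.univ.filter fun w => G.Reachable v w) ⊆ S := by
                intro w hw
                simp only [Finset.mem_filter, Finset.mem_univ, true_and] at hw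
                obtain ⟨p⟩ := hw
                exact walk_end_mem_closed hclosed p (by simp [hS])
              have hSk : S.card = k := by
                have h1 : k ≤ S.card := le_trans hcomp (Finset.card_le_card hcompsub)
                omega
              have hNS : ℓ ≤ (extNbhd G S).card := hexp S hSk
              have : extNbhd G S = ∅ := by
                rw [Finset.eq_empty_iff_forall_notMem]
                intro b hb
                simp only [extNbhd, Finset.mem_filter, Finset.mem_univ, true_and] at hb
                obtain ⟨hbS, u, huS, hadj⟩ := hb
                exact hbS (hclosed u huS b hadj)
              rw [this] at hNS
              simp at hNS
              omega
          | @cons _ y _ hadj r' =>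
              -- pop `x` into the finished set
              have hxr' : x ∉ r'.support := (SimpleGraph.Walk.cons_isPath_iff hadj r').mp hr |>.2
              have hxU : x ∉ U := fun h => (hdisj x h) (by simp)
              refine ih (insert x U) y r' hr.of_cons ?_ ?_ ?_ ?_
              · intro u hu
                rcases Finset.mem_insert.mp hu with rfl | huU
                · exact hxr'
                · intro h
                  exact (hdisj u huU) (by simp [SimpleGraph.Walk.support_cons, h])
              · rw [Finset.card_insert_of_notMem hxU]; omega
              · intro u hu w hadj'
                rcases Finset.mem_insert.mp hu with rfl | huU
                · rcases hxnbr w hadj' with h | h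
                  · exact Or.inl (Finset.mem_insert_of_mem h)
                  · simp only [SimpleGraph.Walk.support_cons, List.mem_cons] at h
                    rcases h with rfl | h
                    · exact absurd rfl hadj'.ne'
                    · exact Or.inr h
                · rcases hcl u huU w hadj' with h | h
                  · exact Or.inl (Finset.mem_insert_of_mem h)
                  · simp only [SimpleGraph.Walk.support_cons, List.mem_cons] at h
                    rcases h with rfl | h
                    · exact Or.inl (Finset.mem_insert_self _ _)
                    · exact Or.inr h
              · rw [Finset.card_insert_of_notMem hxU]
                have h1 : k - (U.card + 1) = (k - U.card) - 1 := by omega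
                rw [h1, Nat.sub_one_mul]
                have hM : Fintype.card V + 1 ≤ (k - U.card) * (Fintype.card V + 1) :=
                  Nat.le_mul_of_pos_left _ (by omega)
                have h2 : (SimpleGraph.Walk.cons hadj r').support.length
                    = r'.support.length + 1 := by
                  simp [SimpleGraph.Walk.support_cons]
                omega

/-- if every `k`-set has external neighborhood of size at least `ℓ` and
the component of `v` has at least `k` vertices, then there is a path of length `ℓ`
starting at `v`. -/
theorem long_path_from_vertex {V : Type*} [Fintype V] (G : SimpleGraph V) (k ℓ : ℕ)
    (hk : 0 < k) (hℓ : 0 < ℓ) (hn : k < Fintype.card V)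
    (hexp : ∀ W : Finset V, W.card = k → ℓ ≤ (extNbhd G W).card)
    (v : V) (hcomp : k ≤ (Finset.univ.filter fun w => G.Reachable v w).card) :
    ∃ (w : V) (p : G.Walk v w), p.IsPath ∧ p.length = ℓ := by
  refine dfs_aux G k ℓ hk hℓ hexp v hcomp
    (k * (Fintype.card V + 1) + (Fintype.card V + 1)) ∅ v SimpleGraph.Walk.nil
    SimpleGraph.Walk.IsPath.nil (by simp) (by simp) (by simp) ?_
  have : (SimpleGraph.Walk.nil : G.Walk v v).support.length = 1 := by simp
  rw [this]
  simp only [Finset.card_empty, Nat.sub_zero]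
  omega
end

section
/- In a (k,α)-expander, for every vertex v there exists a path of length ⌈α·⌊k⌋⌉ starting at v, provided the connected component of v contains at least k vertices. -/
set_option linter.unusedVariables false


open Finset SimpleGraph
open scoped Classical

private lemma walk_take {V : Type*} {G : SimpleGraph V} :
    ∀ {a b : V} (q : G.Walk a b) (L : ℕ), L ≤ q.length →
      ∃ (c : V) (p : G.Walk a c), p.length = L ∧ p.support <+: q.support := by
  intro a b q
  induction q with
  | nil =>
    intro L hL
    simp only [Walk.length_nil, Nat.le_zero] at hL
    subst hL
    exact ⟨_, Walk.nil, rfl, List.prefix_refl _⟩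
  | @cons u x y h q ih =>
    intro L hL
    match L with
    | 0 => exact ⟨_, Walk.nil, rfl, ⟨(Walk.cons h q).support.tail, by simp⟩⟩
    | Nat.succ L' =>
      obtain ⟨c, p, hlen, t, ht⟩ := ih L' (by simpa [Walk.length_cons] using hL)
      exact ⟨c, Walk.cons h p, by simp [hlen], ⟨t, by simp [ht]⟩⟩

private lemma dfs_aux_s8 {V : Type*} [Fintype V] {G : SimpleGraph V} {k α : ℝ}
    (hα : 0 < α) (hk : 0 < k) (hG : IsKExpander G k α) (v : V) :
    ∀ (n : ℕ) (S : Finset V) (w : V) (p : G.Walk w v),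
      p.IsPath → (∀ x ∈ S, x ∉ p.support) →
      (∀ s ∈ S, ∀ t, G.Adj s t → t ∈ S ∨ t ∈ p.support) →
      S.card < ⌊k⌋₊ →
      2 * (Finset.univ \ (S ∪ p.support.toFinset)).card + p.length < n →
      ∃ (w' : V) (q : G.Walk w' v), q.IsPath ∧ ⌈α * (⌊k⌋₊ : ℝ)⌉₊ ≤ q.length := by
  intro n
  induction n with
  | zero => intro S w p _ _ _ _ hm; omega
  | succ n ih =>
    intro S w p hp hdisj hclos hS hm
    by_cases hA : ∃ t, t ∉ S ∧ t ∉ p.support ∧ G.Adj w t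
    · -- extend the path
      obtain ⟨t, htS, htp, hadj⟩ := hA
      refine ih S t (Walk.cons hadj.symm p) (hp.cons htp) ?_ ?_ hS ?_
      · intro x hx
        simp only [Walk.support_cons, List.mem_cons]
        rintro (rfl | hx')
        · exact htS hx
        · exact hdisj x hx hx'
      · intro s hs t' hadj'
        rcases hclos s hs t' hadj' with h | h
        · exact Or.inl h
        · exact Or.inr (by simp [Walk.support_cons, h])
      · have hset : Finset.univ \ (S ∪ (Walk.cons hadj.symm p).support.toFinset)
            = (Finset.univ \ (S ∪ p.support.toFinset)).erase t := by
          ext x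
          simp only [Walk.support_cons, List.toFinset_cons, Finset.mem_sdiff,
            Finset.mem_union, Finset.mem_erase, Finset.mem_univ, true_and,
            Finset.mem_insert, List.mem_toFinset]
          tauto
        have htmem : t ∈ Finset.univ \ (S ∪ p.support.toFinset) := by
          simp only [Finset.mem_sdiff, Finset.mem_union, Finset.mem_univ, true_and,
            List.mem_toFinset]
          tauto
        have hcard : ((Finset.univ \ (S ∪ p.support.toFinset)).erase t).card
            = (Finset.univ \ (S ∪ p.support.toFinset)).card - 1 :=
          Finset.card_erase_of_mem htmem
        have hpos : 0 < (Finset.univ \ (S ∪ p.support.toFinset)).card :=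
          Finset.card_pos.2 ⟨t, htmem⟩
        rw [hset, hcard]
        simp only [Walk.length_cons]
        omega
    · -- no extension possible: all neighbors of w are in S ∪ support
      push_neg at hA
      have hA' : ∀ t, G.Adj w t → t ∈ S ∨ t ∈ p.support := by
        intro t ht
        by_contra hc
        push_neg at hc
        exact hA t hc.1 hc.2 ht
      have hwS : w ∉ S := fun h => hdisj w h p.start_mem_support
      set T : Finset V := insert w S with hT
      have hTcard : T.card = S.card + 1 := Finset.card_insert_of_notMem hwS
      have hTfloor : T.card ≤ ⌊k⌋₊ := by omega
      have hTk : (T.card : ℝ) ≤ k :=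
        le_trans (by exact_mod_cast hTfloor) (Nat.floor_le hk.le)
      have hnodup : p.support.Nodup := (Walk.isPath_def p).1 hp
      have hsuppcard : p.support.toFinset.card = p.length + 1 := by
        rw [List.toFinset_card_of_nodup hnodup, Walk.length_support]
      have hdisjF : Disjoint S p.support.toFinset := by
        rw [Finset.disjoint_left]
        intro x hx hx'
        exact hdisj x hx (List.mem_toFinset.1 hx')
      have hUcard : (S ∪ p.support.toFinset).card = S.card + p.length + 1 := by
        rw [Finset.card_union_of_disjoint hdisjF, hsuppcard]; ring
      have hTsub : T ⊆ S ∪ p.support.toFinset := by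
        intro x hx
        rcases Finset.mem_insert.1 hx with rfl | hx'
        · exact Finset.mem_union_right _ (List.mem_toFinset.2 p.start_mem_support)
        · exact Finset.mem_union_left _ hx'
      have hsub : extNbhd G T ⊆ (S ∪ p.support.toFinset) \ T := by
        intro x hx
        simp only [extNbhd, Finset.mem_filter, Finset.mem_univ, true_and] at hx
        obtain ⟨hxT, u, huT, hadj⟩ := hx
        refine Finset.mem_sdiff.2 ⟨?_, hxT⟩
        rcases Finset.mem_insert.1 huT with rfl | huS
        · rcases hA' x hadj with h | h
          · exact Finset.mem_union_left _ h
          · exact Finset.mem_union_right _ (List.mem_toFinset.2 h)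
        · rcases hclos u huS x hadj with h | h
          · exact Finset.mem_union_left _ h
          · exact Finset.mem_union_right _ (List.mem_toFinset.2 h)
      have hsdcard : ((S ∪ p.support.toFinset) \ T).card = p.length := by
        rw [Finset.card_sdiff_of_subset hTsub, hUcard, hTcard]; omega
      by_cases hfull : T.card = ⌊k⌋₊
      · -- the expander condition gives a long path right now
        refine ⟨w, p, hp, ?_⟩
        have hexp := hG T hTk
        have hle : ((extNbhd G T).card : ℝ) ≤ (p.length : ℝ) := by
          have := Finset.card_le_card hsub
          rw [hsdcard] at this
          exact_mod_cast this
        have : α * (⌊k⌋₊ : ℝ) ≤ (p.length : ℝ) := by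
          rw [← hfull]; linarith
        exact Nat.ceil_le.2 this
      · -- pop the top of the stack
        cases p with
        | nil =>
          exfalso
          have hexp := hG T hTk
          have hle0 : (extNbhd G T).card = 0 := by
            have := Finset.card_le_card hsub
            rw [hsdcard] at this
            simpa using this
          have hle : ((extNbhd G T).card : ℝ) ≤ 0 := by rw [hle0]; norm_num
          have hT1 : (1 : ℝ) ≤ (T.card : ℝ) := by
            have : 1 ≤ T.card := by omega
            exact_mod_cast this
          nlinarith
        | @cons _ u _ hadj p'' =>
          have hwsupp : w ∉ p''.support := by
            have := hnodup
            simp only [Walk.support_cons, List.nodup_cons] at this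
            exact this.1
          refine ih T u p'' hp.of_cons ?_ ?_ (by omega) ?_
          · intro x hx
            rcases Finset.mem_insert.1 hx with rfl | hx'
            · exact hwsupp
            · intro hmem
              exact hdisj x hx' (by simp [Walk.support_cons, hmem])
          · intro s hs t hadj'
            rcases Finset.mem_insert.1 hs with rfl | hs'
            · rcases hA' t hadj' with h | h
              · exact Or.inl (Finset.mem_insert_of_mem h)
              · simp only [Walk.support_cons, List.mem_cons] at h
                rcases h with rfl | h
                · exact Or.inl (Finset.mem_insert_self _ _)
                · exact Or.inr h
            · rcases hclos s hs' t hadj' with h | h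
              · exact Or.inl (Finset.mem_insert_of_mem h)
              · simp only [Walk.support_cons, List.mem_cons] at h
                rcases h with rfl | h
                · exact Or.inl (Finset.mem_insert_self _ _)
                · exact Or.inr h
          · have hset : T ∪ p''.support.toFinset
                = S ∪ (Walk.cons hadj p'').support.toFinset := by
              ext x
              simp only [hT, Walk.support_cons, List.toFinset_cons, Finset.mem_union,
                Finset.mem_insert, List.mem_toFinset]
              tauto
            rw [hset]
            simp only [Walk.length_cons] at hm ⊢
            omega

/-- in a `(k,α)`-expander, from every vertex whose component has at least
`k` vertices there is a path of length `⌈α⌊k⌋⌉`. -/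
theorem long_path_in_expander {V : Type*} [Fintype V] (G : SimpleGraph V) (k α : ℝ)
    (hk : 0 < k) (hα : 0 < α) (hG : IsKExpander G k α) (v : V)
    (hcomp : k ≤ ((Finset.univ.filter fun w => G.Reachable v w).card : ℝ)) :
    ∃ (w : V) (p : G.Walk v w), p.IsPath ∧ p.length = ⌈α * (⌊k⌋₊ : ℝ)⌉₊ := by
  by_cases hm : ⌊k⌋₊ = 0
  · refine ⟨v, Walk.nil, Walk.IsPath.nil, ?_⟩
    simp [hm]
  · obtain ⟨w', q, hq, hlen⟩ := dfs_aux_s8 hα hk hG v (2 * Fintype.card V + 1) ∅ v Walk.nil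
      Walk.IsPath.nil (by simp) (by simp) (Nat.pos_of_ne_zero hm)
      (by
        have : (Finset.univ \ (∅ ∪ (Walk.nil : G.Walk v v).support.toFinset)).card
            ≤ Fintype.card V := Finset.card_le_card (Finset.sdiff_subset)
        simp only [Walk.length_nil]
        omega)
    obtain ⟨c, p, hplen, hpre⟩ := walk_take q.reverse ⌈α * (⌊k⌋₊ : ℝ)⌉₊
      (by simpa using hlen)
    refine ⟨c, p, ?_, hplen⟩
    rw [Walk.isPath_def]
    exact ((Walk.isPath_def _).1 hq.reverse).sublist hpre.sublist
end

section
/- Let G = (V,E) be an α-expander on n vertices with 0 < α ≤ 1, and let W ⊆ V be a vertex set with |W| > n/2 and |N_G(W)| ≤ αεn for some 0 < ε < 1/4. Then there exists a vertex set U ⊆ W of size |U| > (1/2 − 2ε)n such that G[U] is a ((1/2 − 2ε)n, α/2)-expander. -/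
open Finset SimpleGraph
open scoped Classical

lemma extNbhd_induce_image {V : Type*} [Fintype V] (G : SimpleGraph V) (U : Finset V)
    (T : Finset ↥(U : Set V)) :
    (extNbhd (G.induce (U : Set V)) T).image Subtype.val
      = extNbhd G (T.image Subtype.val) ∩ U := by
  ext v
  simp only [extNbhd, Finset.mem_image, Finset.mem_filter, Finset.mem_univ, true_and,
    Finset.mem_inter, SimpleGraph.comap_adj, Function.Embedding.coe_subtype]
  constructor
  · rintro ⟨⟨v, hv⟩, ⟨hvT, u, huT, hadj⟩, rfl⟩
    refine ⟨⟨?_, ⟨↑u, ⟨u, huT, rfl⟩, hadj⟩⟩, hv⟩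
    rintro ⟨w, hwT, hwv⟩
    exact hvT (Subtype.ext hwv ▸ hwT)
  · rintro ⟨⟨hvT, u, ⟨u', hu'T, rfl⟩, hadj⟩, hvU⟩
    exact ⟨⟨v, hvU⟩, ⟨fun h => hvT ⟨_, h, rfl⟩, u', hu'T, hadj⟩, rfl⟩

/-- a large set with small external neighborhood in an α-expander contains
a large `((1/2 - 2ε)n, α/2)`-expander. -/
theorem large_sub_expander {V : Type*} [Fintype V] (G : SimpleGraph V) (α ε : ℝ)
    (hα0 : 0 < α) (hα1 : α ≤ 1) (hG : IsAlphaExpander G α)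
    (hε0 : 0 < ε) (hε1 : ε < 1 / 4) (W : Finset V)
    (hW : (Fintype.card V : ℝ) / 2 < W.card)
    (hNW : ((extNbhd G W).card : ℝ) ≤ α * ε * Fintype.card V) :
    ∃ U : Finset V, U ⊆ W ∧ (1 / 2 - 2 * ε) * Fintype.card V < (U.card : ℝ) ∧
      IsKExpander (G.induce (U : Set V)) ((1 / 2 - 2 * ε) * Fintype.card V) (α / 2) := by
  classical
  have hn0 : (0 : ℝ) ≤ Fintype.card V := Nat.cast_nonneg _
  suffices h : ∀ m : ℕ, ∀ U : Finset V, U.card ≤ m → U ⊆ W →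
      ((extNbhd G (W \ U) ∩ U).card : ℝ) ≤ α / 2 * (W \ U).card →
      ((W \ U).card : ℝ) ≤ 2 * ε * Fintype.card V →
      ∃ U' : Finset V, U' ⊆ W ∧ (1 / 2 - 2 * ε) * Fintype.card V < (U'.card : ℝ) ∧
        IsKExpander (G.induce (U' : Set V)) ((1 / 2 - 2 * ε) * Fintype.card V) (α / 2) by
    refine h W.card W le_rfl Finset.Subset.rfl ?_ ?_
    · simp [extNbhd]
    · simp only [Finset.sdiff_self, Finset.card_empty, Nat.cast_zero]
      positivity
  intro m
  induction m with
  | zero =>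
    intro U hUm hUW hP hQ
    have hU : U = ∅ := Finset.card_eq_zero.mp (Nat.le_zero.mp hUm)
    subst hU
    rw [Finset.sdiff_empty] at hQ
    nlinarith
  | succ m ih =>
    intro U hUm hUW hP hQ
    by_cases hexp : IsKExpander (G.induce (U : Set V))
        ((1 / 2 - 2 * ε) * Fintype.card V) (α / 2)
    · refine ⟨U, hUW, ?_, hexp⟩
      have hsum : (W \ U).card + U.card = W.card := Finset.card_sdiff_add_card_eq_card hUW
      have : ((W \ U).card : ℝ) + U.card = W.card := by exact_mod_cast hsum
      nlinarith
    · rw [IsKExpander] at hexp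
      push_neg at hexp
      obtain ⟨T, hTk, hTbad⟩ := hexp
      set S : Finset V := T.image Subtype.val with hSdef
      have hScard : S.card = T.card := Finset.card_image_of_injective _ Subtype.val_injective
      have hSU : S ⊆ U := by
        intro v hv
        simp only [hSdef, Finset.mem_image] at hv
        obtain ⟨u, -, rfl⟩ := hv
        exact Finset.mem_coe.mp u.2
      have hkey : ((extNbhd G S ∩ U).card : ℝ) < α / 2 * S.card := by
        rw [hScard, ← extNbhd_induce_image,
          Finset.card_image_of_injective _ Subtype.val_injective]
        exact hTbad
      have hSne : S.Nonempty := by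
        rw [Finset.nonempty_iff_ne_empty]
        intro h
        rw [h, Finset.card_empty] at hkey
        norm_num at hkey
        exact absurd hkey (Nat.cast_nonneg _).not_gt
      -- the new removed set
      have hD' : W \ (U \ S) = (W \ U) ∪ S := by
        ext v
        simp only [Finset.mem_sdiff, Finset.mem_union]
        constructor
        · rintro ⟨hvW, hv⟩
          by_cases hvS : v ∈ S
          · exact Or.inr hvS
          · exact Or.inl ⟨hvW, fun hvU => hv ⟨hvU, hvS⟩⟩
        · rintro (⟨hvW, hvU⟩ | hvS)
          · exact ⟨hvW, fun h => hvU h.1⟩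
          · exact ⟨hUW (hSU hvS), fun h => h.2 hvS⟩
      have hdisj : Disjoint (W \ U) S := Finset.sdiff_disjoint.mono_right hSU
      have hD'card : ((W \ (U \ S)).card : ℝ) = (W \ U).card + S.card := by
        rw [hD', Finset.card_union_of_disjoint hdisj]; push_cast; ring
      -- P is maintained
      have hsub1 : extNbhd G ((W \ U) ∪ S) ∩ (U \ S) ⊆
          (extNbhd G (W \ U) ∩ U) ∪ (extNbhd G S ∩ U) := by
        intro v hv
        simp only [extNbhd, Finset.mem_inter, Finset.mem_filter, Finset.mem_univ, true_and,
          Finset.mem_sdiff, Finset.mem_union] at hv ⊢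
        obtain ⟨⟨hvD', u, huD', hadj⟩, hvU, hvS⟩ := hv
        rcases huD' with h | h
        · exact Or.inl ⟨⟨fun hc => hvD' (Or.inl hc), u, h, hadj⟩, hvU⟩
        · exact Or.inr ⟨⟨hvS, u, h, hadj⟩, hvU⟩
      have hP' : ((extNbhd G (W \ (U \ S)) ∩ (U \ S)).card : ℝ) ≤
          α / 2 * (W \ (U \ S)).card := by
        rw [hD'card]
        calc ((extNbhd G (W \ (U \ S)) ∩ (U \ S)).card : ℝ)
            ≤ ((extNbhd G (W \ U) ∩ U) ∪ (extNbhd G S ∩ U)).card := by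
              exact_mod_cast Finset.card_le_card (hD' ▸ hsub1)
          _ ≤ ((extNbhd G (W \ U) ∩ U).card : ℝ) + (extNbhd G S ∩ U).card := by
              exact_mod_cast Finset.card_union_le _ _
          _ ≤ α / 2 * (W \ U).card + α / 2 * S.card := by linarith [hkey.le]
          _ = α / 2 * (((W \ U).card : ℝ) + S.card) := by ring
      -- Q is maintained, via the expansion of G
      have hhalf : ((W \ (U \ S)).card : ℝ) ≤ Fintype.card V / 2 := by
        rw [hD'card, hScard]; linarith
      have hnat : (W \ (U \ S)).card ≤ (Fintype.card V + 1) / 2 := by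
        have h2 : 2 * (W \ (U \ S)).card ≤ Fintype.card V := by
          exact_mod_cast (by push_cast; linarith : ((2 * (W \ (U \ S)).card : ℕ) : ℝ) ≤
            (Fintype.card V : ℝ))
        omega
      have hexpand := hG _ hnat
      have hsub2 : extNbhd G (W \ (U \ S)) ⊆
          extNbhd G W ∪ (extNbhd G (W \ (U \ S)) ∩ (U \ S)) := by
        intro v hv
        simp only [extNbhd, Finset.mem_filter, Finset.mem_univ, true_and, Finset.mem_union,
          Finset.mem_inter, Finset.mem_sdiff] at hv ⊢
        obtain ⟨hvD', u, huD', hadj⟩ := hv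
        by_cases hvW : v ∈ W
        · refine Or.inr ⟨⟨hvD', u, huD', hadj⟩, ?_, ?_⟩
          · by_contra hvU
            exact hvD' ⟨hvW, fun h => absurd h.1 hvU⟩
          · intro hvS
            exact hvD' ⟨hvW, fun h => h.2 hvS⟩
        · exact Or.inl ⟨hvW, u, huD'.1, hadj⟩
      have hQ' : ((W \ (U \ S)).card : ℝ) ≤ 2 * ε * Fintype.card V := by
        have h1 : ((extNbhd G (W \ (U \ S))).card : ℝ) ≤
            ((extNbhd G W).card : ℝ) + (extNbhd G (W \ (U \ S)) ∩ (U \ S)).card := by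
          calc ((extNbhd G (W \ (U \ S))).card : ℝ)
              ≤ ((extNbhd G W ∪ (extNbhd G (W \ (U \ S)) ∩ (U \ S))).card : ℝ) := by
                exact_mod_cast Finset.card_le_card hsub2
            _ ≤ _ := by exact_mod_cast Finset.card_union_le _ _
        have h2 : α * (W \ (U \ S)).card ≤
            α * ε * Fintype.card V + α / 2 * (W \ (U \ S)).card := by linarith
        nlinarith
      -- recurse
      have hUS : U \ S ⊂ U := Finset.sdiff_ssubset hSU hSne
      have hcard : (U \ S).card ≤ m := by
        have := Finset.card_lt_card hUS
        omega
      exact ih (U \ S) hcard ((Finset.sdiff_subset).trans hUW) hP' hQ'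
end

section
/- Let β > 0 and let G be a β-graph on n vertices. Then G contains an induced subgraph G' on at least (1 − β)n vertices such that every vertex set U ⊆ V(G') with |U| ≤ βn satisfies |N_{G'}(U)| ≥ ((1 − 3β)/(2β))·|U|. -/
open Finset SimpleGraph
open scoped Classical

/-- every β-graph contains an induced subgraph on at least `(1-β)n`
vertices in which every set of at most `βn` vertices expands by factor `(1-3β)/(2β)`.
(The external neighborhood of `W` in the induced subgraph `G[U]`, for `W ⊆ U`, is
`extNbhd G W ∩ U`.) -/
theorem beta_graph_contains_expander {V : Type*} [Fintype V] (G : SimpleGraph V) (β : ℝ)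
    (hβ : 0 < β) (hG : IsBetaGraph G β) :
    ∃ U : Finset V, (1 - β) * Fintype.card V ≤ (U.card : ℝ) ∧
      ∀ W : Finset V, W ⊆ U → (W.card : ℝ) ≤ β * Fintype.card V →
        (1 - 3 * β) / (2 * β) * W.card ≤ (((extNbhd G W) ∩ U).card : ℝ) := by
  classical
  set n : ℝ := (Fintype.card V : ℝ) with hn
  set c : ℝ := (1 - 3 * β) / (2 * β) with hc
  have hn0 : 0 ≤ n := by positivity
  have hcβ : 2 * β * c = 1 - 3 * β := by
    rw [hc]; field_simp
  -- subset lemma for neighborhoods of unions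
  have hsub : ∀ W W' : Finset V,
      extNbhd G (W ∪ W') ⊆ extNbhd G W ∪ (extNbhd G W' ∩ Wᶜ) := by
    intro W W' v hv
    simp only [extNbhd, mem_filter, mem_univ, true_and, mem_union, mem_inter,
      mem_compl] at hv ⊢
    obtain ⟨hv1, u, hu, hadj⟩ := hv
    rcases hu with h | h
    · exact Or.inl ⟨fun hvW => hv1 (Or.inl hvW), u, h, hadj⟩
    · exact Or.inr ⟨⟨fun hvW' => hv1 (Or.inr hvW'), u, h, hadj⟩,
        fun hvW => hv1 (Or.inl hvW)⟩
  -- a violating set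
  set P : Finset V → Prop :=
    fun W => (W.card : ℝ) ≤ 2 * β * n ∧ ((extNbhd G W).card : ℝ) < c * W.card with hP
  -- any violating set is smaller than βn
  have hkey : ∀ W : Finset V, P W → (W.card : ℝ) < β * n := by
    intro W ⟨hW1, hW2⟩
    by_contra hcon
    push_neg at hcon
    set B : Finset V := (W ∪ extNbhd G W)ᶜ with hB
    have hdis : Disjoint W B := by
      have : Disjoint (W ∪ extNbhd G W) B := disjoint_compl_right
      exact this.mono_left subset_union_left
    have hWpos : (0:ℝ) < W.card := by
      rcases Nat.eq_zero_or_pos W.card with h | h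
      · exfalso
        rw [h] at hW2
        simp at hW2
        have : (0:ℝ) ≤ ((extNbhd G W).card : ℝ) := by positivity
        linarith
      · exact_mod_cast h
    have hcpos : 0 < c := by
      have hNnn : (0:ℝ) ≤ ((extNbhd G W).card : ℝ) := by positivity
      nlinarith
    have hBcard : (B.card : ℝ) = n - ((W ∪ extNbhd G W).card : ℝ) := by
      have := Finset.card_add_card_compl (W ∪ extNbhd G W)
      rw [← hB] at this
      have := congrArg (Nat.cast (R := ℝ)) this
      push_cast at this
      linarith
    have hUnion : ((W ∪ extNbhd G W).card : ℝ) ≤ (W.card : ℝ) + ((extNbhd G W).card : ℝ) := by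
      exact_mod_cast Finset.card_union_le _ _
    have hBbig : β * n ≤ (B.card : ℝ) := by nlinarith
    obtain ⟨a, ha, b, hb, hab⟩ := hG W B hdis hcon hBbig
    have hbW : b ∉ W ∪ extNbhd G W := Finset.mem_compl.mp hb
    apply hbW
    by_cases hbW' : b ∈ W
    · exact Finset.mem_union_left _ hbW'
    · refine Finset.mem_union_right _ ?_
      simp only [extNbhd, mem_filter, mem_univ, true_and]
      exact ⟨hbW', a, ha, hab⟩
  by_cases hex : ∃ W, P W
  · -- take a maximum violating set
    obtain ⟨W₀, hW₀⟩ := hex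
    obtain ⟨W, hWmem, hWmax⟩ :=
      Finset.exists_max_image (Finset.univ.filter P) (fun W => W.card)
        ⟨W₀, Finset.mem_filter.mpr ⟨Finset.mem_univ _, hW₀⟩⟩
    have hWP : P W := (Finset.mem_filter.mp hWmem).2
    have hWsmall : (W.card : ℝ) < β * n := hkey W hWP
    refine ⟨Wᶜ, ?_, ?_⟩
    · have := Finset.card_add_card_compl W
      have := congrArg (Nat.cast (R := ℝ)) this
      push_cast at this
      linarith
    · intro W' hW'U hW'c
      rcases W'.eq_empty_or_nonempty with rfl | hW'ne
      · simp
      · have hdisj : Disjoint W W' :=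
          Finset.disjoint_left.mpr fun a haW haW' =>
            (Finset.mem_compl.mp (hW'U haW')) haW
        have hUcard : (W ∪ W').card = W.card + W'.card :=
          Finset.card_union_of_disjoint hdisj
        have hnotP : ¬ P (W ∪ W') := by
          intro hPu
          have := hWmax _ (Finset.mem_filter.mpr ⟨Finset.mem_univ _, hPu⟩)
          simp only [hUcard] at this
          have hpos : 0 < W'.card := Finset.card_pos.mpr hW'ne
          omega
        have h1 : ((W ∪ W').card : ℝ) ≤ 2 * β * n := by
          rw [hUcard]; push_cast; linarith
        have h2 : c * ((W ∪ W').card : ℝ) ≤ ((extNbhd G (W ∪ W')).card : ℝ) := by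
          by_contra h
          push_neg at h
          exact hnotP ⟨h1, h⟩
        have h3 : ((extNbhd G (W ∪ W')).card : ℝ) ≤
            ((extNbhd G W).card : ℝ) + ((extNbhd G W' ∩ Wᶜ).card : ℝ) := by
          calc ((extNbhd G (W ∪ W')).card : ℝ)
              ≤ ((extNbhd G W ∪ (extNbhd G W' ∩ Wᶜ)).card : ℝ) := by
                exact_mod_cast Finset.card_le_card (hsub W W')
            _ ≤ _ := by exact_mod_cast Finset.card_union_le _ _
        have h4 : ((extNbhd G W).card : ℝ) < c * W.card := hWP.2
        rw [hUcard] at h2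
        push_cast at h2
        nlinarith
  · -- no violating set: the whole graph works
    push_neg at hex
    refine ⟨Finset.univ, ?_, ?_⟩
    · rw [Finset.card_univ]
      nlinarith
    · intro W _ hWc
      have hc2 : (W.card : ℝ) ≤ 2 * β * n := by
        have : (0:ℝ) ≤ (W.card : ℝ) := by positivity
        nlinarith
      have h : c * (W.card : ℝ) ≤ ((extNbhd G W).card : ℝ) := by
        by_contra h'
        push_neg at h'
        exact hex W ⟨hc2, h'⟩
      rw [Finset.inter_univ]
      linarith
end

section
/- Let G be a β-graph on n vertices and suppose G contains a subgraph consisting of two vertex-disjoint trees T₁, T₂ each having at least βn leaves, together with a path of length p joining the root of T₁ to the root of T₂ and internally disjoint from the trees, where in each Tᵢ all leaves are at distance t from the root. Then G contains a cycle of length p + 2t + 1. -/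
open Finset SimpleGraph
open scoped Classical

/-- if a β-graph contains two vertex-disjoint trees, each with at least
`βn` leaves all at distance `t` from the root, whose roots are joined by a path of
length `p` internally disjoint from the trees, then it contains a cycle of length
`p + 2t + 1`. -/
theorem two_trees_give_cycle {V : Type*} [Fintype V] (G : SimpleGraph V) (β : ℝ)
    (hβ : 0 < β) (hG : IsBetaGraph G β) (T₁ T₂ : G.Subgraph)
    (hT₁ : T₁.coe.IsTree) (hT₂ : T₂.coe.IsTree)
    (hdisj : Disjoint T₁.verts T₂.verts)
    (r₁ r₂ : V) (hr₁ : r₁ ∈ T₁.verts) (hr₂ : r₂ ∈ T₂.verts)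
    (t p : ℕ) (ht : 1 ≤ t)
    (L₁ L₂ : Finset V)
    (hL₁sub : ∀ v ∈ L₁, v ∈ T₁.verts) (hL₂sub : ∀ v ∈ L₂, v ∈ T₂.verts)
    (hL₁card : β * Fintype.card V ≤ L₁.card) (hL₂card : β * Fintype.card V ≤ L₂.card)
    (hL₁leaf : ∀ v ∈ L₁, ∀ hv : v ∈ T₁.verts, T₁.coe.degree ⟨v, hv⟩ = 1)
    (hL₂leaf : ∀ v ∈ L₂, ∀ hv : v ∈ T₂.verts, T₂.coe.degree ⟨v, hv⟩ = 1)
    (hL₁dist : ∀ v ∈ L₁, ∀ hv : v ∈ T₁.verts, T₁.coe.dist ⟨r₁, hr₁⟩ ⟨v, hv⟩ = t)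
    (hL₂dist : ∀ v ∈ L₂, ∀ hv : v ∈ T₂.verts, T₂.coe.dist ⟨r₂, hr₂⟩ ⟨v, hv⟩ = t)
    (Q : G.Walk r₁ r₂) (hQ : Q.IsPath) (hQlen : Q.length = p)
    (hQint : ∀ v ∈ Q.support, v ≠ r₁ → v ≠ r₂ → v ∉ T₁.verts ∧ v ∉ T₂.verts) :
    ∃ (v : V) (c : G.Walk v v), c.IsCycle ∧ c.length = p + 2 * t + 1 := by
  -- Find an edge between the leaf sets
  have hdisjL : Disjoint L₁ L₂ := Finset.disjoint_left.mpr fun {x} hx₁ hx₂ =>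
    (Set.disjoint_left.mp hdisj (hL₁sub x hx₁)) (hL₂sub x hx₂)
  obtain ⟨a, haL, b, hbL, hab⟩ := hG L₁ L₂ hdisjL hL₁card hL₂card
  have ha : a ∈ T₁.verts := hL₁sub a haL
  have hb : b ∈ T₂.verts := hL₂sub b hbL
  -- Paths within the trees
  obtain ⟨P₁', hP₁'path, hP₁'len⟩ :=
    (hT₁.isConnected.preconnected ⟨r₁, hr₁⟩ ⟨a, ha⟩).exists_path_of_dist
  obtain ⟨P₂', hP₂'path, hP₂'len⟩ :=
    (hT₂.isConnected.preconnected ⟨r₂, hr₂⟩ ⟨b, hb⟩).exists_path_of_dist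
  rw [hL₁dist a haL ha] at hP₁'len
  rw [hL₂dist b hbL hb] at hP₂'len
  set P₁ : G.Walk r₁ a := P₁'.map T₁.hom with hP₁def
  set P₂ : G.Walk r₂ b := P₂'.map T₂.hom with hP₂def
  have hP₁path : P₁.IsPath := Walk.map_isPath_of_injective Subgraph.hom_injective hP₁'path
  have hP₂path : P₂.IsPath := Walk.map_isPath_of_injective Subgraph.hom_injective hP₂'path
  have hP₁len : P₁.length = t := (Walk.length_map _ _).trans hP₁'len
  have hP₂len : P₂.length = t := (Walk.length_map _ _).trans hP₂'len
  have hP₁sup : ∀ v ∈ P₁.support, v ∈ T₁.verts := by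
    intro v hv
    replace hv : v ∈ (P₁'.map T₁.hom).support := hv; rw [Walk.support_map] at hv
    obtain ⟨w, _, rfl⟩ := List.mem_map.mp hv
    exact w.2
  have hP₂sup : ∀ v ∈ P₂.support, v ∈ T₂.verts := by
    intro v hv
    replace hv : v ∈ (P₂'.map T₂.hom).support := hv; rw [Walk.support_map] at hv
    obtain ⟨w, _, rfl⟩ := List.mem_map.mp hv
    exact w.2
  have hbr₂ : b ≠ r₂ := by
    intro h
    have hd := hL₂dist b hbL hb
    have : (⟨r₂, hr₂⟩ : T₂.verts) = ⟨b, hb⟩ := Subtype.ext h.symm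
    rw [← this, SimpleGraph.dist_self] at hd
    omega
  -- basic disjointness of vertex classes
  have hT12 : ∀ v, v ∈ T₁.verts → v ∈ T₂.verts → False := fun v h₁ h₂ =>
    (Set.disjoint_left.mp hdisj h₁) h₂
  -- facts about Q's tail
  have hQtailmem : ∀ v ∈ Q.support.tail, v ∈ Q.support := by
    intro v hv
    rw [Q.support_eq_cons]
    exact List.mem_cons_of_mem _ hv
  have hr₁tail : r₁ ∉ Q.support.tail := by
    have := hQ.support_nodup
    rw [Q.support_eq_cons] at this
    exact (List.nodup_cons.mp this).1
  have hr₂tail : r₂ ∉ P₂.support.tail := by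
    have := hP₂path.support_nodup
    rw [P₂.support_eq_cons] at this
    exact (List.nodup_cons.mp this).1
  have hP₂tailmem : ∀ v ∈ P₂.support.tail, v ∈ P₂.support := by
    intro v hv
    rw [P₂.support_eq_cons]
    exact List.mem_cons_of_mem _ hv
  -- the long path R from a to b
  set R : G.Walk a b := (P₁.reverse.append Q).append P₂ with hRdef
  have hRsup : R.support = P₁.reverse.support ++ Q.support.tail ++ P₂.support.tail := by
    rw [hRdef, Walk.support_append, Walk.support_append]
  have hP₁rev : ∀ v ∈ P₁.reverse.support, v ∈ T₁.verts := by
    intro v hv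
    rw [Walk.support_reverse, List.mem_reverse] at hv
    exact hP₁sup v hv
  have hRpath : R.IsPath := by
    rw [Walk.isPath_def, hRsup, List.nodup_append, List.nodup_append]
    refine ⟨⟨?_, ?_, ?_⟩, ?_, ?_⟩
    · rw [Walk.support_reverse]
      exact List.nodup_reverse.mpr hP₁path.support_nodup
    · have hn := hQ.support_nodup
      rw [Q.support_eq_cons] at hn
      exact hn.of_cons
    · intro v hv₁ w hv₂ hvw; subst hvw
      have hvT₁ := hP₁rev v hv₁
      have hvQ := hQtailmem v hv₂
      have hvr₁ : v ≠ r₁ := fun h => hr₁tail (h ▸ hv₂)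
      by_cases hvr₂ : v = r₂
      · exact hT12 v hvT₁ (hvr₂ ▸ hr₂)
      · exact (hQint v hvQ hvr₁ hvr₂).1 hvT₁
    · have hn := hP₂path.support_nodup
      rw [P₂.support_eq_cons] at hn
      exact hn.of_cons
    · intro v hv₁ w hv₂ hvw; subst hvw
      have hvT₂ := hP₂sup v (hP₂tailmem v hv₂)
      rcases List.mem_append.mp hv₁ with h | h
      · exact hT12 v (hP₁rev v h) hvT₂
      · have hvQ := hQtailmem v h
        have hvr₁ : v ≠ r₁ := fun he => hr₁tail (he ▸ h)
        have hvr₂ : v ≠ r₂ := fun he => hr₂tail (he ▸ hv₂)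
        exact (hQint v hvQ hvr₁ hvr₂).2 hvT₂
  -- the closing edge is not on R
  have hedge : s(b, a) ∉ R.edges := by
    intro he
    rw [hRdef, Walk.edges_append, Walk.edges_append] at he
    rcases List.mem_append.mp he with he | he
    · rcases List.mem_append.mp he with he | he
      · exact hT12 b (hP₁rev b (Walk.fst_mem_support_of_mem_edges _ he)) hb
      · have hbQ := Walk.fst_mem_support_of_mem_edges _ he
        have hbr₁ : b ≠ r₁ := fun h => hT12 b (h ▸ hr₁) hb
        exact (hQint b hbQ hbr₁ hbr₂).2 hb
    · exact hT12 a ha (hP₂sup a (Walk.snd_mem_support_of_mem_edges _ he))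
  refine ⟨b, Walk.cons hab.symm R, (Walk.cons_isCycle_iff R hab.symm).mpr ⟨hRpath, hedge⟩, ?_⟩
  rw [Walk.length_cons, hRdef, Walk.length_append, Walk.length_append,
    Walk.length_reverse, hP₁len, hP₂len, hQlen]
  omega
end

section
/- Let d, m, M be positive integers and let H be a non-empty graph such that (1) every U ⊆ V(H) with 0 < |U| ≤ m satisfies |N_H(U)| ≥ d|U| + 1, and (2) every U ⊆ V(H) with m < |U| ≤ 2m satisfies |N_H(U)| ≥ d|U| + M. Then H contains every tree on M vertices with maximum degree at most d as a subgraph. -/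
open Finset SimpleGraph
open scoped Classical

namespace HaxellAux
open SimpleGraph.Walk

lemma tree_struct {M : ℕ} (hM : 0 < M) (T : SimpleGraph (Fin M)) (hT : T.IsTree) :
    ∃ (r : Fin M) (par : Fin M → Fin M) (dep : Fin M → ℕ),
      (∀ v, v ≠ r → T.Adj v (par v)) ∧
      (∀ v, v ≠ r → dep (par v) + 1 = dep v) ∧
      (∀ a b, T.Adj a b → (a ≠ r ∧ par a = b) ∨ (b ≠ r ∧ par b = a)) := by
  have : Nonempty (Fin M) := ⟨⟨0, hM⟩⟩
  obtain ⟨r⟩ := this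
  choose f hf hf' using (hT.existsUnique_path · r)
  -- f v : unique path from v to r
  refine ⟨r, fun v => (f v).getVert 1, fun v => (f v).length, ?_, ?_, ?_⟩
  · intro v hv
    have hnn : ¬ (f v).Nil := not_nil_of_ne hv
    have hlen : 0 < (f v).length := by
      rcases Nat.eq_zero_or_pos (f v).length with h | h
      · exact absurd ((nil_iff_length_eq).2 h) hnn
      · exact h
    have := (f v).adj_getVert_succ (i := 0) hlen
    simpa using this
  · intro v hv
    have hnn : ¬ (f v).Nil := not_nil_of_ne hv
    have htail : (f v).tail.IsPath := (hf v).tail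
    have heq := hf' ((f v).getVert 1) (f v).tail htail
    show (f ((f v).getVert 1)).length + 1 = (f v).length
    rw [← heq]
    exact length_tail_add_one hnn
  · intro a b hab
    have har : a ≠ r ∨ True := Or.inr trivial
    by_cases hb : b ∈ (f a).support
    · -- parent of a is b
      left
      have hane : a ≠ b := hab.ne
      have har : a ≠ r := by
        intro h
        have hfr : Walk.nil = f r := hf' r Walk.nil IsPath.nil
        rw [h, ← hfr] at hb
        simp at hb
        exact hane (h.trans hb.symm)
      refine ⟨har, ?_⟩
      -- f b = (f a).dropUntil b hb
      have hdrop : ((f a).dropUntil b hb).IsPath := (hf a).dropUntil hb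
      have hfb : (f a).dropUntil b hb = f b := hf' b _ hdrop
      -- cons (hab) (f b) is a path
      have hnotmem : a ∉ (f b).support := by
        intro hmem
        rw [← hfb] at hmem
        have hspec := (f a).take_spec hb
        have hnodup := (hf a).support_nodup
        rw [← hspec, support_append] at hnodup
        rw [List.nodup_append] at hnodup
        have hatake : a ∈ ((f a).takeUntil b hb).support := start_mem_support _
        rcases support_eq_cons ((f a).dropUntil b hb) ▸ hmem with hmem'
        rw [support_eq_cons] at hmem
        rcases List.mem_cons.1 hmem with h | h
        · exact hane h
        · exact hnodup.2.2 a hatake a h rfl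
      have hcons : (Walk.cons hab (f b)).IsPath := (cons_isPath_iff _ _).2 ⟨hf b, hnotmem⟩
      have heq := hf' a _ hcons
      show (f a).getVert 1 = b
      rw [← heq]
      rw [Walk.getVert_cons _ _ one_ne_zero]
      simp
    · -- parent of b is a
      right
      have hbr : b ≠ r := by
        rintro rfl
        exact hb (end_mem_support _)
      refine ⟨hbr, ?_⟩
      have hcons : (Walk.cons hab.symm (f a)).IsPath := (cons_isPath_iff _ _).2 ⟨hf a, hb⟩
      have heq := hf' b _ hcons
      show (f b).getVert 1 = a
      rw [← heq]
      rw [Walk.getVert_cons _ _ one_ne_zero]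
      simp


variable {VH : Type*} [Fintype VH]

variable {M : ℕ}

/-- children of `x` w.r.t. root `r` and parent map `par`. -/
noncomputable def chil (r : Fin M) (par : Fin M → Fin M) (x : Fin M) : Finset (Fin M) :=
  Finset.univ.filter fun v => v ≠ r ∧ par v = x

/-- number of children of `x` not yet embedded. -/
noncomputable def rem (r : Fin M) (par : Fin M → Fin M) (S : Finset (Fin M)) (x : Fin M) : ℕ :=
  ((chil r par x) \ S).card

noncomputable def Aw (H : SimpleGraph VH) (S : Finset (Fin M)) (f : Fin M → VH)
    (U : Finset VH) : ℕ :=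
  ((extNbhd H U) \ S.image f).card

noncomputable def Bw (H : SimpleGraph VH) (d : ℕ) (r : Fin M) (par : Fin M → Fin M)
    (S : Finset (Fin M)) (f : Fin M → VH) (U : Finset VH) : ℕ :=
  d * ((U \ S.image f).card) + ∑ x ∈ S.filter (fun x => f x ∈ U), rem r par S x

structure Good (H : SimpleGraph VH) (d m : ℕ) (r : Fin M) (par : Fin M → Fin M)
    (S : Finset (Fin M)) (f : Fin M → VH) : Prop where
  rootMem : r ∈ S
  closed : ∀ v ∈ S, v ≠ r → par v ∈ S
  inj : Set.InjOn f S
  adj : ∀ v ∈ S, v ≠ r → H.Adj (f (par v)) (f v)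
  inv : ∀ U : Finset VH, U.card ≤ 2 * m → Bw H d r par S f U ≤ Aw H S f U

variable {H : SimpleGraph VH} {d m : ℕ} {r : Fin M} {par : Fin M → Fin M}

lemma rem_le (S : Finset (Fin M)) (x : Fin M) : rem r par S x ≤ (chil r par x).card :=
  card_le_card (sdiff_subset)

/-- B is at most d|U|. -/
lemma Bw_le_dU {S : Finset (Fin M)} {f : Fin M → VH}
    (hinj : Set.InjOn f S) (hchil : ∀ x, (chil r par x).card ≤ d) (U : Finset VH) :
    Bw H d r par S f U ≤ d * U.card := by
  have h1 : ∑ x ∈ S.filter (fun x => f x ∈ U), rem r par S x ≤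
      d * (S.filter (fun x => f x ∈ U)).card := by
    calc ∑ x ∈ S.filter (fun x => f x ∈ U), rem r par S x
        ≤ ∑ _x ∈ S.filter (fun x => f x ∈ U), d :=
          Finset.sum_le_sum fun x _ => le_trans (rem_le S x) (hchil x)
      _ = (S.filter (fun x => f x ∈ U)).card * d := by rw [Finset.sum_const, smul_eq_mul]
      _ = d * (S.filter (fun x => f x ∈ U)).card := mul_comm _ _
  have h2 : (S.filter (fun x => f x ∈ U)).card ≤ (U ∩ S.image f).card := by
    have : (S.filter (fun x => f x ∈ U)).image f ⊆ U ∩ S.image f := by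
      intro y hy
      simp only [mem_image, mem_filter] at hy
      obtain ⟨x, ⟨hxS, hxU⟩, rfl⟩ := hy
      exact mem_inter.2 ⟨hxU, mem_image_of_mem f hxS⟩
    calc (S.filter (fun x => f x ∈ U)).card
        = ((S.filter (fun x => f x ∈ U)).image f).card :=
          (card_image_of_injOn (fun a ha b hb hab =>
            hinj (mem_filter.1 ha).1 (mem_filter.1 hb).1 hab)).symm
      _ ≤ (U ∩ S.image f).card := card_le_card this
  have h3 : (U \ S.image f).card + (U ∩ S.image f).card = U.card := by
    rw [add_comm]
    exact card_inter_add_card_sdiff U (S.image f)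
  calc Bw H d r par S f U ≤ d * (U \ S.image f).card + d * (U ∩ S.image f).card :=
        Nat.add_le_add_left (le_trans h1 (Nat.mul_le_mul_left d h2)) _
    _ = d * U.card := by rw [← Nat.mul_add, h3]

/-- critical sets have size at most m (assuming the graph conditions). -/
lemma crit_small {Mtot : ℕ}
    (h2cond : ∀ U : Finset VH, m < U.card → U.card ≤ 2 * m →
      d * U.card + Mtot ≤ (extNbhd H U).card)
    {S : Finset (Fin M)} {f : Fin M → VH}
    (hinj : Set.InjOn f S) (hchil : ∀ x, (chil r par x).card ≤ d)
    (hS : S.card + 1 ≤ Mtot)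
    {U : Finset VH} (hU2 : U.card ≤ 2 * m) (heq : Bw H d r par S f U = Aw H S f U) :
    U.card ≤ m := by
  by_contra hc
  push_neg at hc
  have hA : d * U.card + 1 ≤ Aw H S f U := by
    have hext := h2cond U hc hU2
    have hFcard : (S.image f).card ≤ S.card := card_image_le
    have : (extNbhd H U).card ≤ Aw H S f U + (S.image f).card := by
      unfold Aw
      calc (extNbhd H U).card ≤ ((extNbhd H U) \ S.image f ∪ S.image f).card :=
            card_le_card (fun v hv => by
              by_cases h : v ∈ S.image f
              · exact mem_union_right _ h
              · exact mem_union_left _ (mem_sdiff.2 ⟨hv, h⟩))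
        _ ≤ ((extNbhd H U) \ S.image f).card + (S.image f).card := card_union_le _ _
    omega
  have hB := Bw_le_dU (H := H) hinj hchil U
  omega

/-- modularity of B. -/
lemma Bw_modular {S : Finset (Fin M)} {f : Fin M → VH} (U₁ U₂ : Finset VH) :
    Bw H d r par S f (U₁ ∪ U₂) + Bw H d r par S f (U₁ ∩ U₂) =
      Bw H d r par S f U₁ + Bw H d r par S f U₂ := by
  unfold Bw
  have hcard : ((U₁ ∪ U₂) \ S.image f).card + ((U₁ ∩ U₂) \ S.image f).card =
      (U₁ \ S.image f).card + (U₂ \ S.image f).card := by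
    have e1 : (U₁ ∪ U₂) \ S.image f = (U₁ \ S.image f) ∪ (U₂ \ S.image f) :=
      by ext v; simp [mem_sdiff, mem_union]; tauto
    have e2 : (U₁ ∩ U₂) \ S.image f = (U₁ \ S.image f) ∩ (U₂ \ S.image f) := by
      ext v; simp [mem_sdiff, mem_inter]; tauto
    rw [e1, e2]
    exact card_union_add_card_inter _ _
  have hsum : ∑ x ∈ S.filter (fun x => f x ∈ U₁ ∪ U₂), rem r par S x +
      ∑ x ∈ S.filter (fun x => f x ∈ U₁ ∩ U₂), rem r par S x =
      ∑ x ∈ S.filter (fun x => f x ∈ U₁), rem r par S x +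
      ∑ x ∈ S.filter (fun x => f x ∈ U₂), rem r par S x := by
    have e1 : S.filter (fun x => f x ∈ U₁ ∪ U₂) =
        S.filter (fun x => f x ∈ U₁) ∪ S.filter (fun x => f x ∈ U₂) := by
      ext x; simp [mem_filter, mem_union]; tauto
    have e2 : S.filter (fun x => f x ∈ U₁ ∩ U₂) =
        S.filter (fun x => f x ∈ U₁) ∩ S.filter (fun x => f x ∈ U₂) := by
      ext x; simp [mem_filter, mem_inter]; tauto
    rw [e1, e2]
    exact sum_union_inter
  have hd : d * ((U₁ ∪ U₂) \ S.image f).card + d * ((U₁ ∩ U₂) \ S.image f).card =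
      d * (U₁ \ S.image f).card + d * (U₂ \ S.image f).card := by
    rw [← Nat.mul_add, ← Nat.mul_add, hcard]
  omega


lemma extNbhd_empty (G : SimpleGraph VH) : extNbhd G (∅ : Finset VH) = ∅ := by
  ext v; simp [extNbhd]

lemma extNbhd_subset_union {G : SimpleGraph VH} {U W : Finset VH} (h : U ⊆ W) :
    extNbhd G U ⊆ extNbhd G W ∪ W := by
  intro v hv
  simp only [extNbhd, mem_filter, mem_univ, true_and] at hv
  obtain ⟨hvU, u, hu, hadj⟩ := hv
  by_cases hvW : v ∈ W
  · exact mem_union_right _ hvW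
  · refine mem_union_left _ ?_
    simp only [extNbhd, mem_filter, mem_univ, true_and]
    exact ⟨hvW, u, h hu, hadj⟩

lemma mem_extNbhd {G : SimpleGraph VH} {U : Finset VH} {v : VH} :
    v ∈ extNbhd G U ↔ v ∉ U ∧ ∃ u ∈ U, G.Adj u v := by
  simp [extNbhd]

lemma ext_submod (G : SimpleGraph VH) (F U₁ U₂ : Finset VH) :
    (extNbhd G (U₁ ∪ U₂) \ F).card + (extNbhd G (U₁ ∩ U₂) \ F).card ≤
      (extNbhd G U₁ \ F).card + (extNbhd G U₂ \ F).card := by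
  set X := extNbhd G (U₁ ∪ U₂) \ F with hX
  set Y := extNbhd G (U₁ ∩ U₂) \ F with hY
  set Z₁ := extNbhd G U₁ \ F with hZ₁
  set Z₂ := extNbhd G U₂ \ F with hZ₂
  have h1 : X ∪ Y ⊆ Z₁ ∪ Z₂ := by
    intro v hv
    rcases mem_union.1 hv with hv | hv
    · rw [hX, mem_sdiff, mem_extNbhd] at hv
      obtain ⟨⟨hvU, u, hu, hadj⟩, hvF⟩ := hv
      rcases mem_union.1 hu with hu | hu
      · exact mem_union_left _ (by rw [hZ₁, mem_sdiff, mem_extNbhd]; exact ⟨⟨fun hc => hvU (mem_union_left _ hc), u, hu, hadj⟩, hvF⟩)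
      · exact mem_union_right _ (by rw [hZ₂, mem_sdiff, mem_extNbhd]; exact ⟨⟨fun hc => hvU (mem_union_right _ hc), u, hu, hadj⟩, hvF⟩)
    · rw [hY, mem_sdiff, mem_extNbhd] at hv
      obtain ⟨⟨hvU, u, hu, hadj⟩, hvF⟩ := hv
      rw [mem_inter] at hu
      by_cases hv1 : v ∈ U₁
      · have hv2 : v ∉ U₂ := fun hc => hvU (mem_inter.2 ⟨hv1, hc⟩)
        exact mem_union_right _ (by rw [hZ₂, mem_sdiff, mem_extNbhd]; exact ⟨⟨hv2, u, hu.2, hadj⟩, hvF⟩)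
      · exact mem_union_left _ (by rw [hZ₁, mem_sdiff, mem_extNbhd]; exact ⟨⟨hv1, u, hu.1, hadj⟩, hvF⟩)
  have h2 : X ∩ Y ⊆ Z₁ ∩ Z₂ := by
    intro v hv
    rw [mem_inter] at hv
    obtain ⟨hvX, hvY⟩ := hv
    rw [hX, mem_sdiff, mem_extNbhd] at hvX
    rw [hY, mem_sdiff, mem_extNbhd] at hvY
    obtain ⟨⟨hvU, _⟩, hvF⟩ := hvX
    obtain ⟨⟨_, u, hu, hadj⟩, _⟩ := hvY
    rw [mem_inter] at hu
    have hv1 : v ∉ U₁ := fun hc => hvU (mem_union_left _ hc)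
    have hv2 : v ∉ U₂ := fun hc => hvU (mem_union_right _ hc)
    rw [mem_inter]
    constructor
    · rw [hZ₁, mem_sdiff, mem_extNbhd]; exact ⟨⟨hv1, u, hu.1, hadj⟩, hvF⟩
    · rw [hZ₂, mem_sdiff, mem_extNbhd]; exact ⟨⟨hv2, u, hu.2, hadj⟩, hvF⟩
  calc X.card + Y.card = (X ∪ Y).card + (X ∩ Y).card := (card_union_add_card_inter X Y).symm
    _ ≤ (Z₁ ∪ Z₂).card + (Z₁ ∩ Z₂).card :=
        Nat.add_le_add (card_le_card h1) (card_le_card h2)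
    _ = Z₁.card + Z₂.card := card_union_add_card_inter Z₁ Z₂


lemma step (hM1 : 0 < m) {Mtot : ℕ}
    (h1cond : ∀ U : Finset VH, 0 < U.card → U.card ≤ 2 * m →
      d * U.card + 1 ≤ (extNbhd H U).card)
    (h2cond : ∀ U : Finset VH, m < U.card → U.card ≤ 2 * m →
      d * U.card + Mtot ≤ (extNbhd H U).card)
    (hchil : ∀ x, (chil r par x).card ≤ d)
    (hchil2 : ∀ x, x ≠ r → (chil r par x).card + 1 ≤ d)
    {S : Finset (Fin M)} {f : Fin M → VH} (hg : Good H d m r par S f)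
    (hScard : S.card + 1 ≤ Mtot)
    {c : Fin M} (hcS : c ∉ S) (hpc : par c ∈ S) (hcr : c ≠ r) :
    ∃ f' : Fin M → VH, Good H d m r par (insert c S) f' := by
  set x := par c with hx
  set F := S.image f with hF
  have hfxF : f x ∈ F := mem_image_of_mem f hpc
  set C := extNbhd H {f x} \ F with hC
  have hcchil : c ∈ chil r par x := by simp [chil, hcr, hx]
  have hrem1 : 1 ≤ rem r par S x := by
    rw [Nat.one_le_iff_ne_zero, ← Nat.pos_iff_ne_zero, rem, card_pos]
    exact ⟨c, mem_sdiff.2 ⟨hcchil, hcS⟩⟩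
  -- facts about rem after inserting c
  have hremS' : ∀ z, z ≠ x → rem r par (insert c S) z = rem r par S z := by
    intro z hz
    unfold rem
    congr 1
    ext w
    simp only [mem_sdiff, mem_insert]
    constructor
    · rintro ⟨hw1, hw2⟩; exact ⟨hw1, fun h => hw2 (Or.inr h)⟩
    · rintro ⟨hw1, hw2⟩
      refine ⟨hw1, ?_⟩
      rintro (rfl | h)
      · simp only [chil, mem_filter] at hw1
        exact hz hw1.2.2.symm
      · exact hw2 h
  have hremx : rem r par (insert c S) x + 1 = rem r par S x := by
    unfold rem
    have : chil r par x \ insert c S = (chil r par x \ S).erase c := by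
      ext w
      simp only [mem_sdiff, mem_erase, mem_insert]
      tauto
    rw [this, card_erase_of_mem (mem_sdiff.2 ⟨hcchil, hcS⟩)]
    have hpos : 0 < (chil r par x \ S).card := card_pos.2 ⟨c, mem_sdiff.2 ⟨hcchil, hcS⟩⟩
    omega
  have hremc : rem r par (insert c S) c + 1 ≤ d :=
    le_trans (Nat.add_le_add_right (rem_le _ _) 1) (hchil2 c hcr)
  -- C is nonempty
  have hCcard : rem r par S x ≤ C.card := by
    have hone : ({f x} : Finset VH).card ≤ 2 * m := by
      simp only [card_singleton]; omega
    have hinv := hg.inv {f x} hone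
    have hBx : Bw H d r par S f {f x} = rem r par S x := by
      unfold Bw
      have h1 : ({f x} : Finset VH) \ F = ∅ := by
        rw [sdiff_eq_empty_iff_subset, singleton_subset_iff]; exact hfxF
      have h2 : S.filter (fun y => f y ∈ ({f x} : Finset VH)) = {x} := by
        ext z
        simp only [mem_filter, mem_singleton]
        constructor
        · rintro ⟨hzS, hzx⟩; exact hg.inj hzS hpc hzx
        · rintro rfl; exact ⟨hpc, rfl⟩
      rw [← hF, h1, h2]
      simp
    rw [hBx] at hinv
    exact hinv
  -- main claim : some candidate works
  suffices hex : ∃ y ∈ C, ∀ U : Finset VH, U.card ≤ 2 * m →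
      Bw H d r par (insert c S) (Function.update f c y) U ≤
        Aw H (insert c S) (Function.update f c y) U by
    obtain ⟨y, hyC, hinv'⟩ := hex
    set f' := Function.update f c y with hf'
    have hyF : y ∉ F := (mem_sdiff.1 hyC).2
    have hadjy : H.Adj (f x) y := by
      have h := (mem_sdiff.1 hyC).1
      simp only [extNbhd, mem_filter, mem_univ, true_and, mem_singleton] at h
      obtain ⟨-, u, hu, hadj⟩ := h
      rwa [hu] at hadj
    have hfeq : ∀ z ∈ S, f' z = f z := fun z hz =>
      Function.update_of_ne (fun h => hcS (by rwa [h] at hz)) _ _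
    refine ⟨f', ⟨mem_insert_of_mem hg.rootMem, ?_, ?_, ?_, hinv'⟩⟩
    · intro v hv hvr
      rcases mem_insert.1 hv with rfl | hv
      · exact mem_insert_of_mem hpc
      · exact mem_insert_of_mem (hg.closed v hv hvr)
    · intro a ha b hb hab
      simp only [coe_insert, Set.mem_insert_iff, mem_coe] at ha hb
      rcases ha with rfl | ha <;> rcases hb with rfl | hb
      · rfl
      · exfalso
        rw [hfeq b hb] at hab
        rw [hf'] at hab
        rw [Function.update_self] at hab
        exact hyF (hab ▸ mem_image_of_mem f hb)
      · exfalso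
        rw [hfeq a ha] at hab
        rw [hf'] at hab
        rw [Function.update_self] at hab
        exact hyF (hab ▸ mem_image_of_mem f ha)
      · exact hg.inj ha hb (by rwa [hfeq a ha, hfeq b hb] at hab)
    · intro v hv hvr
      rcases mem_insert.1 hv with rfl | hv
      · rw [hfeq (par v) hpc]
        rw [hf', Function.update_self]
        exact hadjy
      · rw [hfeq v hv, hfeq (par v) (hg.closed v hv hvr)]
        exact hg.adj v hv hvr
  -- contradiction setup
  by_contra hno
  push_neg at hno
  have key : ∀ y ∈ C, ∃ U : Finset VH, U.card ≤ m ∧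
      Bw H d r par S f U = Aw H S f U ∧ f x ∉ U ∧ y ∈ extNbhd H U := by
    intro y hyC
    obtain ⟨U, hU2, hlt⟩ := hno y hyC
    have hyF : y ∉ F := (mem_sdiff.1 hyC).2
    set f' := Function.update f c y with hf'
    have hfeq : ∀ z ∈ S, f' z = f z := fun z hz =>
      Function.update_of_ne (fun h => hcS (by rwa [h] at hz)) _ _
    have hF' : (insert c S).image f' = insert y F := by
      rw [image_insert]
      congr 1
      · exact Function.update_self c y f
      · rw [hF]
        exact image_congr fun z hz => hfeq z hz
    -- identity (ii)
    have hAeq : Aw H (insert c S) f' U + (if y ∈ extNbhd H U then 1 else 0) =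
        Aw H S f U := by
      unfold Aw
      rw [hF', ← hF]
      have hsd : extNbhd H U \ insert y F = (extNbhd H U \ F).erase y := by
        ext w; simp only [mem_sdiff, mem_erase, mem_insert]; tauto
      by_cases hyN : y ∈ extNbhd H U
      · rw [if_pos hyN, hsd, card_erase_of_mem (mem_sdiff.2 ⟨hyN, hyF⟩)]
        have hpos : 0 < (extNbhd H U \ F).card :=
          card_pos.2 ⟨y, mem_sdiff.2 ⟨hyN, hyF⟩⟩
        omega
      · rw [if_neg hyN, hsd, erase_eq_of_notMem (fun h => hyN (mem_sdiff.1 h).1),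
          add_zero]
    -- identity (iii)
    have hUcard : (U \ insert y F).card + (if y ∈ U then 1 else 0) = (U \ F).card := by
      have hsd : U \ insert y F = (U \ F).erase y := by
        ext w; simp only [mem_sdiff, mem_erase, mem_insert]; tauto
      by_cases hyU : y ∈ U
      · rw [if_pos hyU, hsd, card_erase_of_mem (mem_sdiff.2 ⟨hyU, hyF⟩)]
        have hpos : 0 < (U \ F).card := card_pos.2 ⟨y, mem_sdiff.2 ⟨hyU, hyF⟩⟩
        omega
      · rw [if_neg hyU, hsd, erase_eq_of_notMem (fun h => hyU (mem_sdiff.1 h).1),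
          add_zero]
    -- identity (iv)
    set A := S.filter (fun z => f z ∈ U) with hA
    have hsplit : ∑ x' ∈ A, rem r par (insert c S) x' + (if f x ∈ U then 1 else 0) =
        ∑ x' ∈ A, rem r par S x' := by
      by_cases hfxU : f x ∈ U
      · have hxA : x ∈ A := mem_filter.2 ⟨hpc, hfxU⟩
        rw [if_pos hfxU, ← Finset.add_sum_erase A _ hxA, ← Finset.add_sum_erase A (rem r par S) hxA]
        have heq : ∑ x' ∈ A.erase x, rem r par (insert c S) x' =
            ∑ x' ∈ A.erase x, rem r par S x' :=
          Finset.sum_congr rfl fun z hz => hremS' z (ne_of_mem_erase hz)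
        omega
      · rw [if_neg hfxU, add_zero]
        refine Finset.sum_congr rfl fun z hz => hremS' z ?_
        intro h
        rw [h] at hz
        exact hfxU (mem_filter.1 hz).2
    have hfiltS : S.filter (fun z => f' z ∈ U) = A := by
      rw [hA]
      exact filter_congr fun z hz => by rw [hfeq z hz]
    have hfilt' : (insert c S).filter (fun z => f' z ∈ U) =
        if y ∈ U then insert c A else A := by
      rw [filter_insert]
      have : f' c = y := Function.update_self c y f
      rw [this, hfiltS]
    have hcA : c ∉ A := fun h => hcS (mem_filter.1 h).1
    have hsum : (∑ x' ∈ (insert c S).filter (fun z => f' z ∈ U),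
          rem r par (insert c S) x') + (if f x ∈ U then 1 else 0) =
        ∑ x' ∈ A, rem r par S x' +
          (if y ∈ U then rem r par (insert c S) c else 0) := by
      rw [hfilt']
      by_cases hyU : y ∈ U
      · rw [if_pos hyU, if_pos hyU, Finset.sum_insert hcA]
        omega
      · rw [if_neg hyU, if_neg hyU, add_zero]
        exact hsplit
    -- assemble
    have hinvU := hg.inv U hU2
    have hBval : Bw H d r par (insert c S) f' U =
        d * (U \ insert y F).card + ∑ x' ∈ (insert c S).filter (fun z => f' z ∈ U),
          rem r par (insert c S) x' := by
      unfold Bw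
      rw [hF']
    have hBSval : Bw H d r par S f U = d * (U \ F).card + ∑ x' ∈ A, rem r par S x' := by
      unfold Bw
      rw [← hF, hA]
    by_cases hyU : y ∈ U
    · exfalso
      have hmul : d * (U \ F).card = d * (U \ insert y F).card + d := by
        rw [if_pos hyU] at hUcard
        rw [← hUcard, Nat.mul_add, Nat.mul_one]
      rw [if_pos hyU] at hsum
      by_cases hyN : y ∈ extNbhd H U
      · rw [if_pos hyN] at hAeq; omega
      · rw [if_neg hyN] at hAeq; omega
    · rw [if_neg hyU] at hUcard hsum
      have hmul : d * (U \ F).card = d * (U \ insert y F).card := by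
        rw [← hUcard, add_zero]
      by_cases hfxU : f x ∈ U
      · exfalso
        rw [if_pos hfxU] at hsum
        by_cases hyN : y ∈ extNbhd H U
        · rw [if_pos hyN] at hAeq; omega
        · rw [if_neg hyN] at hAeq; omega
      · rw [if_neg hfxU] at hsum
        by_cases hyN : y ∈ extNbhd H U
        · -- the feasible branch : U is critical
          rw [if_pos hyN] at hAeq
          have heqBA : Bw H d r par S f U = Aw H S f U := by omega
          exact ⟨U, crit_small h2cond hg.inj hchil hScard hU2 heqBA, heqBA, hfxU, hyN⟩
        · exfalso
          rw [if_neg hyN] at hAeq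
          omega
  -- choose critical sets and take their union
  choose Uc hUc1 hUc2 hUc3 hUc4 using key
  set Ustar := C.attach.sup (fun y => Uc y.1 y.2) with hUstar
  have hPbot : (∅ : Finset VH).card ≤ m ∧
      Bw H d r par S f ∅ = Aw H S f ∅ ∧ f x ∉ (∅ : Finset VH) := by
    refine ⟨by simp, ?_, notMem_empty _⟩
    unfold Bw Aw
    rw [extNbhd_empty]
    simp
  have hPsup : ∀ a, (a.card ≤ m ∧ Bw H d r par S f a = Aw H S f a ∧ f x ∉ a) →
      ∀ b, (b.card ≤ m ∧ Bw H d r par S f b = Aw H S f b ∧ f x ∉ b) →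
      ((a ∪ b).card ≤ m ∧ Bw H d r par S f (a ∪ b) = Aw H S f (a ∪ b) ∧ f x ∉ a ∪ b) := by
    rintro a ⟨ha1, ha2, ha3⟩ b ⟨hb1, hb2, hb3⟩
    have hcup : (a ∪ b).card ≤ 2 * m := le_trans (card_union_le _ _) (by omega)
    have hcap : (a ∩ b).card ≤ 2 * m :=
      le_trans (card_le_card (inter_subset_left)) (by omega)
    have hiu := hg.inv (a ∪ b) hcup
    have hii := hg.inv (a ∩ b) hcap
    have hsub := ext_submod H F a b
    have hmod := Bw_modular (H := H) (d := d) (r := r) (par := par) (S := S) (f := f) a b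
    have hAsub : Aw H S f (a ∪ b) + Aw H S f (a ∩ b) ≤ Aw H S f a + Aw H S f b := by
      unfold Aw; rw [← hF]; exact hsub
    have heq : Bw H d r par S f (a ∪ b) = Aw H S f (a ∪ b) := by omega
    exact ⟨crit_small h2cond hg.inj hchil hScard hcup heq, heq,
      fun h => (mem_union.1 h).elim ha3 hb3⟩
  have hPstar : Ustar.card ≤ m ∧ Bw H d r par S f Ustar = Aw H S f Ustar ∧
      f x ∉ Ustar := by
    refine Finset.sup_induction (p := fun U => U.card ≤ m ∧
      Bw H d r par S f U = Aw H S f U ∧ f x ∉ U) hPbot hPsup ?_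
    intro y _
    exact ⟨hUc1 y.1 y.2, hUc2 y.1 y.2, hUc3 y.1 y.2⟩
  obtain ⟨hUs1, hUs2, hUs3⟩ := hPstar
  have hCsub : C ⊆ extNbhd H Ustar ∪ Ustar := by
    intro y hy
    have h4 := hUc4 y hy
    have hsub : Uc y hy ⊆ Ustar := Finset.le_sup (f := fun y => Uc y.1 y.2)
      (mem_attach C ⟨y, hy⟩)
    exact extNbhd_subset_union hsub h4
  -- final contradiction with W = insert (f x) Ustar
  set W := insert (f x) Ustar with hW
  have hWcard : W.card ≤ 2 * m :=
    le_trans (card_insert_le _ _) (by omega)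
  have hinvW := hg.inv W hWcard
  have hAW : Aw H S f W ≤ Aw H S f Ustar := by
    unfold Aw
    rw [← hF]
    refine card_le_card ?_
    intro v hv
    rw [mem_sdiff] at hv
    obtain ⟨hvN, hvF⟩ := hv
    simp only [extNbhd, mem_filter, mem_univ, true_and] at hvN
    obtain ⟨hvW, u, hu, hadj⟩ := hvN
    have hvUs : v ∉ Ustar := fun h => hvW (mem_insert_of_mem h)
    rcases mem_insert.1 hu with rfl | hu
    · -- u = f x ; v is a candidate
      have hvC : v ∈ C := by
        rw [hC, mem_sdiff]
        refine ⟨?_, hvF⟩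
        simp only [extNbhd, mem_filter, mem_univ, true_and, mem_singleton]
        exact ⟨fun h => hvW (h ▸ mem_insert_self _ _), f x, rfl, hadj⟩
      rcases mem_union.1 (hCsub hvC) with h | h
      · exact mem_sdiff.2 ⟨h, hvF⟩
      · exact absurd h hvUs
    · refine mem_sdiff.2 ⟨?_, hvF⟩
      simp only [extNbhd, mem_filter, mem_univ, true_and]
      exact ⟨hvUs, u, hu, hadj⟩
  have hBW : Bw H d r par S f Ustar + 1 ≤ Bw H d r par S f W := by
    unfold Bw
    rw [← hF]
    have hsd : W \ F = Ustar \ F := by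
      ext v
      simp only [hW, mem_sdiff, mem_insert]
      constructor
      · rintro ⟨rfl | hv, hvF⟩
        · exact absurd hfxF hvF
        · exact ⟨hv, ‹_›⟩
      · rintro ⟨hv, hvF⟩; exact ⟨Or.inr hv, hvF⟩
    have hfilt : S.filter (fun z => f z ∈ W) =
        insert x (S.filter (fun z => f z ∈ Ustar)) := by
      ext z
      simp only [mem_filter, mem_insert, hW]
      constructor
      · rintro ⟨hzS, heqz | hz⟩
        · exact Or.inl (hg.inj hzS hpc heqz)
        · exact Or.inr ⟨hzS, hz⟩
      · rintro (rfl | ⟨hzS, hz⟩)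
        · exact ⟨hpc, Or.inl rfl⟩
        · exact ⟨hzS, Or.inr hz⟩
    have hxnot : x ∉ S.filter (fun z => f z ∈ Ustar) :=
      fun h => hUs3 (mem_filter.1 h).2
    rw [hsd, hfilt, Finset.sum_insert hxnot]
    omega
  omega

lemma base (hM1 : 0 < m)
    (h1cond : ∀ U : Finset VH, 0 < U.card → U.card ≤ 2 * m →
      d * U.card + 1 ≤ (extNbhd H U).card)
    (hchil : ∀ x, (chil r par x).card ≤ d) (v0 : VH) :
    Good H d m r par {r} (fun _ => v0) := by
  refine ⟨mem_singleton_self r, ?_, ?_, ?_, ?_⟩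
  · intro v hv hvr
    exact absurd (mem_singleton.1 hv) hvr
  · intro a ha b hb _
    simp only [coe_singleton, Set.mem_singleton_iff] at ha hb
    rw [ha, hb]
  · intro v hv hvr
    exact absurd (mem_singleton.1 hv) hvr
  · intro U hU
    unfold Bw Aw
    have hFim : ({r} : Finset (Fin M)).image (fun _ => v0) = {v0} := by
      simp
    rw [hFim]
    rcases U.eq_empty_or_nonempty with rfl | hne
    · simp [extNbhd_empty]
    · have hA := h1cond U (card_pos.2 hne) hU
      have hA' : (extNbhd H U).card ≤ (extNbhd H U \ {v0}).card + 1 := by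
        have : extNbhd H U ⊆ (extNbhd H U \ {v0}) ∪ {v0} := by
          intro w hw
          by_cases h : w ∈ ({v0} : Finset VH)
          · exact mem_union_right _ h
          · exact mem_union_left _ (mem_sdiff.2 ⟨hw, h⟩)
        calc (extNbhd H U).card ≤ ((extNbhd H U \ {v0}) ∪ {v0}).card := card_le_card this
          _ ≤ (extNbhd H U \ {v0}).card + 1 := by
              refine le_trans (card_union_le _ _) ?_
              simp
      have hrem : rem r par ({r} : Finset (Fin M)) r ≤ d :=
        le_trans (rem_le _ _) (hchil r)
      by_cases hv0 : v0 ∈ U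
      · have hfilt : ({r} : Finset (Fin M)).filter (fun z => (fun _ => v0) z ∈ U)
            = {r} := by
          ext z; simp [hv0]
        rw [hfilt, Finset.sum_singleton]
        have hcard : (U \ {v0}).card + 1 = U.card := by
          rw [card_sdiff_of_subset (singleton_subset_iff.2 hv0), card_singleton]
          have : 0 < U.card := card_pos.2 hne
          omega
        have hmul : d * U.card = d * (U \ {v0}).card + d := by
          conv_lhs => rw [← hcard]
          ring
        omega
      · have hfilt : ({r} : Finset (Fin M)).filter (fun z => (fun _ => v0) z ∈ U)
            = ∅ := by
          ext z; simp [hv0]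
        rw [hfilt, Finset.sum_empty, add_zero]
        have hsd : U \ {v0} = U := by
          ext w; simp only [mem_sdiff, mem_singleton]
          exact ⟨fun h => h.1, fun h => ⟨h, fun hc => hv0 (hc ▸ h)⟩⟩
        rw [hsd]
        omega

lemma grow (hM1 : 0 < m) {Mtot : ℕ}
    (h1cond : ∀ U : Finset VH, 0 < U.card → U.card ≤ 2 * m →
      d * U.card + 1 ≤ (extNbhd H U).card)
    (h2cond : ∀ U : Finset VH, m < U.card → U.card ≤ 2 * m →
      d * U.card + Mtot ≤ (extNbhd H U).card)
    (hchil : ∀ x, (chil r par x).card ≤ d)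
    (hchil2 : ∀ x, x ≠ r → (chil r par x).card + 1 ≤ d)
    (dep : Fin M → ℕ) (hdep : ∀ v, v ≠ r → dep (par v) + 1 = dep v)
    (hMtot : Fintype.card (Fin M) ≤ Mtot) :
    ∀ n (S : Finset (Fin M)) (f : Fin M → VH), Good H d m r par S f →
      (Finset.univ \ S).card = n → ∃ g, Good H d m r par Finset.univ g := by
  intro n
  induction n with
  | zero =>
    intro S f hg hcard
    have hSuniv : S = Finset.univ := by
      have h0 : Finset.univ \ S = ∅ := card_eq_zero.1 hcard
      have := sdiff_eq_empty_iff_subset.1 h0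
      exact le_antisymm (subset_univ S) this
    exact ⟨f, hSuniv ▸ hg⟩
  | succ n ih =>
    intro S f hg hcard
    have hne : (Finset.univ \ S).Nonempty := card_pos.1 (by omega)
    obtain ⟨c, hc, hmin⟩ := Finset.exists_min_image (Finset.univ \ S) dep hne
    have hcS : c ∉ S := (mem_sdiff.1 hc).2
    have hcr : c ≠ r := fun h => hcS (h ▸ hg.rootMem)
    have hpc : par c ∈ S := by
      by_contra hpcS
      have hmem : par c ∈ Finset.univ \ S := mem_sdiff.2 ⟨mem_univ _, hpcS⟩
      have h1 := hmin (par c) hmem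
      have h2 := hdep c hcr
      omega
    have hScard : S.card + 1 ≤ Mtot := by
      have h1 : S.card < Fintype.card (Fin M) := by
        have h2 : (Finset.univ \ S).card = Fintype.card (Fin M) - S.card := by
          rw [card_sdiff_of_subset (subset_univ S), card_univ]
        have h3 : S.card ≤ Fintype.card (Fin M) := by
          rw [← card_univ]; exact card_le_card (subset_univ S)
        omega
      omega
    obtain ⟨f', hf'⟩ := step hM1 h1cond h2cond hchil hchil2 hg hScard hcS hpc hcr
    refine ih (insert c S) f' hf' ?_
    have h3 : S.card ≤ Fintype.card (Fin M) := by
      rw [← card_univ]; exact card_le_card (subset_univ S)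
    have h4 : (Finset.univ \ insert c S).card = Fintype.card (Fin M) - (S.card + 1) := by
      rw [card_sdiff_of_subset (subset_univ _), card_insert_of_notMem hcS, card_univ]
    have h5 : (Finset.univ \ S).card = Fintype.card (Fin M) - S.card := by
      rw [card_sdiff_of_subset (subset_univ S), card_univ]
    omega

end HaxellAux

/-- Haxell: a graph with the two stated expansion conditions contains
every tree on `M` vertices with maximum degree at most `d`. -/
theorem haxell_tree_embedding {VH : Type*} [Fintype VH] [Nonempty VH] (H : SimpleGraph VH)
    (d m M : ℕ) (hd : 0 < d) (hm : 0 < m) (hM : 0 < M)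
    (h1 : ∀ U : Finset VH, 0 < U.card → U.card ≤ m →
      d * U.card + 1 ≤ (extNbhd H U).card)
    (h2 : ∀ U : Finset VH, m < U.card → U.card ≤ 2 * m →
      d * U.card + M ≤ (extNbhd H U).card)
    (T : SimpleGraph (Fin M)) (hT : T.IsTree) (hdeg : ∀ v, T.degree v ≤ d) :
    ∃ f : Fin M → VH, Function.Injective f ∧ ∀ a b, T.Adj a b → H.Adj (f a) (f b) := by
  classical
  obtain ⟨r, par, dep, hadjp, hdep, horient⟩ := HaxellAux.tree_struct hM T hT
  have hchil : ∀ x, (HaxellAux.chil r par x).card ≤ d := by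
    intro x
    have hsub : HaxellAux.chil r par x ⊆ T.neighborFinset x := by
      intro v hv
      simp only [HaxellAux.chil, Finset.mem_filter, Finset.mem_univ, true_and] at hv
      rw [SimpleGraph.mem_neighborFinset]
      exact (hv.2 ▸ hadjp v hv.1).symm
    calc (HaxellAux.chil r par x).card ≤ (T.neighborFinset x).card :=
          Finset.card_le_card hsub
      _ = T.degree x := T.card_neighborFinset_eq_degree x
      _ ≤ d := hdeg x
  have hchil2 : ∀ x, x ≠ r → (HaxellAux.chil r par x).card + 1 ≤ d := by
    intro x hxr
    have hpar : par x ∈ T.neighborFinset x := by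
      rw [SimpleGraph.mem_neighborFinset]
      exact hadjp x hxr
    have hsub : HaxellAux.chil r par x ⊆ (T.neighborFinset x).erase (par x) := by
      intro v hv
      simp only [HaxellAux.chil, Finset.mem_filter, Finset.mem_univ, true_and] at hv
      obtain ⟨hvr, hvp⟩ := hv
      refine Finset.mem_erase.2 ⟨?_, ?_⟩
      · intro heq
        have hd1 := hdep v hvr
        have hd2 := hdep x hxr
        rw [hvp] at hd1
        rw [heq] at hd1
        omega
      · rw [SimpleGraph.mem_neighborFinset]
        exact (hvp ▸ hadjp v hvr).symm
    have hc := Finset.card_le_card hsub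
    rw [Finset.card_erase_of_mem hpar] at hc
    have hd1 : 0 < (T.neighborFinset x).card := Finset.card_pos.2 ⟨par x, hpar⟩
    have hdx : (T.neighborFinset x).card = T.degree x := T.card_neighborFinset_eq_degree x
    have hdd := hdeg x
    omega
  have h1cond : ∀ U : Finset VH, 0 < U.card → U.card ≤ 2 * m →
      d * U.card + 1 ≤ (extNbhd H U).card := by
    intro U h0 h2m
    by_cases hUm : U.card ≤ m
    · exact h1 U h0 hUm
    · have := h2 U (by omega) h2m
      omega
  have hMtot : Fintype.card (Fin M) ≤ M := by rw [Fintype.card_fin]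
  obtain ⟨g, hgood⟩ := HaxellAux.grow (H := H) hm h1cond h2 hchil hchil2 dep hdep hMtot
    ((Finset.univ \ {r}).card) {r} (fun _ => Classical.arbitrary VH)
    (HaxellAux.base hm h1cond hchil _) rfl
  refine ⟨g, ?_, ?_⟩
  · intro a b hab
    exact hgood.inj (Finset.mem_coe.2 (Finset.mem_univ a))
      (Finset.mem_coe.2 (Finset.mem_univ b)) hab
  · intro a b hab
    rcases horient a b hab with ⟨har, hpa⟩ | ⟨hbr, hpb⟩
    · have h := hgood.adj a (Finset.mem_univ a) har
      rw [hpa] at h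
      exact h.symm
    · have h := hgood.adj b (Finset.mem_univ b) hbr
      rw [hpb] at h
      exact h
end

section
/- Let 0 < α ≤ 1 and let G be an α-expander on n vertices. After removing any set S of at most ⌊αn/4⌋ vertices from G, the remaining graph contains a path of length ⌈αn/4⌉ − 1. -/
open Finset SimpleGraph
open scoped Classical

section Aux

variable {V : Type*} [Fintype V] [Nonempty V]

lemma dfs_main (G : SimpleGraph V) (α : ℝ) (hα0 : 0 < α) (hα1 : α ≤ 1)
    (hG : IsAlphaExpander G α) (S : Finset V)
    (hS : S.card ≤ ⌊α * Fintype.card V / 4⌋₊) :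
    ∀ μ : ℕ, ∀ (T : Finset V) (u w : V) (p : G.Walk u w),
      p.IsPath →
      (∀ v ∈ p.support, v ∉ S) →
      (∀ v ∈ p.support, v ∉ T) →
      (∀ t ∈ T, ∀ x, G.Adj t x → x ∈ T ∨ x ∈ p.support ∨ x ∈ S) →
      T.card < (Fintype.card V + 1) / 2 →
      p.length ≤ ⌈α * Fintype.card V / 4⌉₊ - 1 →
      2 * ((Fintype.card V + 1) / 2) + (⌈α * Fintype.card V / 4⌉₊ - 1)
        ≤ μ + 2 * T.card + p.length →
      ∃ (u w : V) (p : G.Walk u w), p.IsPath ∧ (∀ v ∈ p.support, v ∉ S) ∧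
        p.length = ⌈α * Fintype.card V / 4⌉₊ - 1 := by
  set n := Fintype.card V with hn
  set m := ⌈α * (n : ℕ) / 4⌉₊ with hm
  set K := (n + 1) / 2 with hK
  have hn1 : 1 ≤ n := Fintype.card_pos
  have hSn : S.card ≤ n / 4 := by
    have h1 : ⌊α * (n : ℝ) / 4⌋₊ ≤ ⌊(n : ℝ) / 4⌋₊ := by
      apply Nat.floor_le_floor
      have : α * (n : ℝ) ≤ (n : ℝ) := by nlinarith [Nat.cast_nonneg (α := ℝ) n]
      linarith
    have h2 : ⌊(n : ℝ) / 4⌋₊ = n / 4 := by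
      rw [show ((4 : ℝ)) = ((4 : ℕ) : ℝ) by norm_num, Nat.floor_div_natCast, Nat.floor_natCast]
    omega
  intro μ
  induction μ with
  | zero =>
    intro T u w p hp hpS hpT hTnb hTK hplen hμ
    omega
  | succ μ ih =>
    intro T u w p hp hpS hpT hTnb hTK hplen hμ
    by_cases hdone : p.length = m - 1
    · exact ⟨u, w, p, hp, hpS, hdone⟩
    have hplen' : p.length < m - 1 := lt_of_le_of_ne hplen hdone
    by_cases hpush : ∃ x, G.Adj u x ∧ x ∉ S ∧ x ∉ T ∧ x ∉ p.support
    · obtain ⟨x, hadj, hxS, hxT, hxp⟩ := hpush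
      apply ih T x w (Walk.cons hadj.symm p)
      · exact hp.cons hxp
      · intro v hv
        rw [Walk.support_cons, List.mem_cons] at hv
        rcases hv with rfl | hv
        · exact hxS
        · exact hpS v hv
      · intro v hv
        rw [Walk.support_cons, List.mem_cons] at hv
        rcases hv with rfl | hv
        · exact hxT
        · exact hpT v hv
      · intro t ht y hy
        rcases hTnb t ht y hy with h | h | h
        · exact Or.inl h
        · exact Or.inr (Or.inl (by rw [Walk.support_cons]; exact List.mem_cons_of_mem _ h))
        · exact Or.inr (Or.inr h)
      · exact hTK
      · rw [Walk.length_cons]; omega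
      · rw [Walk.length_cons]; omega
    · -- pop case
      push_neg at hpush
      have hup : u ∈ p.support := Walk.start_mem_support p
      have huT : u ∉ T := hpT u hup
      have huS : u ∉ S := hpS u hup
      set T' := insert u T with hT'
      have hT'card : T'.card = T.card + 1 := card_insert_of_notMem huT
      have hsub : extNbhd G T' ⊆ S ∪ p.support.toFinset := by
        intro v hv
        simp only [extNbhd, mem_filter, mem_univ, true_and] at hv
        obtain ⟨hvT', t, htT', hadj⟩ := hv
        have hvT : v ∉ T := fun h => hvT' (mem_insert_of_mem h)
        rw [hT', mem_insert] at htT'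
        rcases htT' with rfl | ht
        · by_cases hvS : v ∈ S
          · exact mem_union_left _ hvS
          · exact mem_union_right _ (List.mem_toFinset.mpr (hpush v hadj hvS hvT))
        · rcases hTnb t ht v hadj with h | h | h
          · exact absurd h hvT
          · exact mem_union_right _ (List.mem_toFinset.mpr h)
          · exact mem_union_left _ h
      by_cases hKeq : T.card + 1 = K
      · exfalso
        have hexp := hG T' (by rw [hT'card, hKeq])
        have hcard : (extNbhd G T').card ≤ S.card + (m - 1) := by
          calc (extNbhd G T').card ≤ (S ∪ p.support.toFinset).card := card_le_card hsub
            _ ≤ S.card + p.support.toFinset.card := card_union_le _ _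
            _ ≤ S.card + p.support.length := by
                have := p.support.toFinset_card_le
                omega
            _ ≤ S.card + (m - 1) := by
                rw [Walk.length_support]
                omega
        have hm2 : 2 ≤ m := by omega
        have hx0 : (0:ℝ) ≤ α * (n:ℝ) / 4 := by positivity
        have hSx : (S.card : ℝ) ≤ α * (n:ℝ) / 4 := by
          calc (S.card : ℝ) ≤ (⌊α * (n:ℝ) / 4⌋₊ : ℝ) := by exact_mod_cast hS
            _ ≤ α * (n:ℝ) / 4 := Nat.floor_le hx0
        have hmx : ((m - 1 : ℕ) : ℝ) < α * (n:ℝ) / 4 := by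
          have h1 : (m : ℝ) < α * (n:ℝ) / 4 + 1 := by
            exact_mod_cast Nat.ceil_lt_add_one hx0
          rw [Nat.cast_sub (by omega)]
          push_cast
          linarith
        have hKn : (n : ℝ) / 2 ≤ (K : ℝ) := by
          have : n ≤ 2 * K := by omega
          have : (n : ℝ) ≤ 2 * (K : ℝ) := by exact_mod_cast this
          linarith
        have h1 : α * ((n : ℝ) / 2) ≤ α * (T'.card : ℝ) := by
          apply mul_le_mul_of_nonneg_left _ (le_of_lt hα0)
          rw [hT'card, hKeq]
          exact_mod_cast hKn
        have h2 : ((extNbhd G T').card : ℝ) ≤ (S.card : ℝ) + ((m-1:ℕ) : ℝ) := by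
          exact_mod_cast hcard
        nlinarith
      · -- continue: T.card + 1 < K
        have hT'K : T'.card < K := by omega
        cases p with
        | nil =>
          -- restart
          have hcard_small : (T' ∪ S).card < n := by
            have h1 : (T' ∪ S).card ≤ T'.card + S.card := card_union_le _ _
            omega
          have : ((T' ∪ S)ᶜ).Nonempty := by
            rw [← card_pos, card_compl]
            omega
          obtain ⟨v, hv⟩ := this
          rw [mem_compl, mem_union, not_or] at hv
          obtain ⟨hvT', hvS⟩ := hv
          apply ih T' v v Walk.nil
          · exact Walk.IsPath.nil
          · intro y hy
            rw [Walk.support_nil, List.mem_singleton] at hy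
            subst hy; exact hvS
          · intro y hy
            rw [Walk.support_nil, List.mem_singleton] at hy
            subst hy; exact hvT'
          · intro t ht y hy
            rw [hT', mem_insert] at ht
            rcases ht with rfl | ht
            · by_cases hyS : y ∈ S
              · exact Or.inr (Or.inr hyS)
              by_cases hyT : y ∈ T
              · exact Or.inl (mem_insert_of_mem hyT)
              have h := hpush y hy hyS hyT
              rw [Walk.support_nil, List.mem_singleton] at h
              exact Or.inl (by rw [h]; exact mem_insert_self _ _)
            · rcases hTnb t ht y hy with h | h | h
              · exact Or.inl (mem_insert_of_mem h)
              · rw [Walk.support_nil, List.mem_singleton] at h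
                exact Or.inl (by rw [h]; exact mem_insert_self _ _)
              · exact Or.inr (Or.inr h)
          · exact hT'K
          · simp only [Walk.length_nil]; omega
          · simp only [Walk.length_nil] at hμ ⊢; omega
        | cons hadj q =>
          rename_i u'
          apply ih T' u' w q
          · exact hp.of_cons
          · intro y hy
            exact hpS y (by rw [Walk.support_cons]; exact List.mem_cons_of_mem _ hy)
          · intro y hy
            rw [hT', mem_insert]
            push_neg
            constructor
            · intro h; subst h
              exact ((Walk.cons_isPath_iff _ _).mp hp).2 hy
            · exact hpT y (by rw [Walk.support_cons]; exact List.mem_cons_of_mem _ hy)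
          · intro t ht y hy
            rw [hT', mem_insert] at ht
            rcases ht with rfl | ht
            · by_cases hyS : y ∈ S
              · exact Or.inr (Or.inr hyS)
              by_cases hyT : y ∈ T
              · exact Or.inl (mem_insert_of_mem hyT)
              have h := hpush y hy hyS hyT
              rw [Walk.support_cons, List.mem_cons] at h
              rcases h with rfl | h
              · exact Or.inl (mem_insert_self _ _)
              · exact Or.inr (Or.inl h)
            · rcases hTnb t ht y hy with h | h | h
              · exact Or.inl (mem_insert_of_mem h)
              · rw [Walk.support_cons, List.mem_cons] at h
                rcases h with rfl | h
                · exact Or.inl (mem_insert_self _ _)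
                · exact Or.inr (Or.inl h)
              · exact Or.inr (Or.inr h)
          · exact hT'K
          · rw [Walk.length_cons] at hplen; omega
          · rw [Walk.length_cons] at hμ hplen; omega

end Aux

/-- after deleting at most `⌊αn/4⌋` vertices from an α-expander, the
remaining graph contains a path of length `⌈αn/4⌉ - 1`. -/
theorem long_path_after_deletion {V : Type*} [Fintype V] [Nonempty V]
    (G : SimpleGraph V) (α : ℝ) (hα0 : 0 < α) (hα1 : α ≤ 1)
    (hG : IsAlphaExpander G α) (S : Finset V)
    (hS : S.card ≤ ⌊α * Fintype.card V / 4⌋₊) :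
    ∃ (u w : V) (p : G.Walk u w), p.IsPath ∧ (∀ v ∈ p.support, v ∉ S) ∧
      p.length = ⌈α * Fintype.card V / 4⌉₊ - 1 := by
  have hn1 : 1 ≤ Fintype.card V := Fintype.card_pos
  have hSn : S.card ≤ Fintype.card V / 4 := by
    have h1 : ⌊α * (Fintype.card V : ℝ) / 4⌋₊ ≤ ⌊(Fintype.card V : ℝ) / 4⌋₊ := by
      apply Nat.floor_le_floor
      have : α * (Fintype.card V : ℝ) ≤ (Fintype.card V : ℝ) := by
        nlinarith [Nat.cast_nonneg (α := ℝ) (Fintype.card V)]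
      linarith
    have h2 : ⌊(Fintype.card V : ℝ) / 4⌋₊ = Fintype.card V / 4 := by
      rw [show ((4 : ℝ)) = ((4 : ℕ) : ℝ) by norm_num, Nat.floor_div_natCast, Nat.floor_natCast]
    omega
  have hScompl : (Sᶜ : Finset V).Nonempty := by
    rw [← card_pos, card_compl]
    omega
  obtain ⟨v₀, hv₀⟩ := hScompl
  rw [mem_compl] at hv₀
  apply dfs_main G α hα0 hα1 hG S hS
    (2 * ((Fintype.card V + 1) / 2) + ⌈α * Fintype.card V / 4⌉₊) ∅ v₀ v₀ Walk.nil
  · exact Walk.IsPath.nil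
  · intro y hy
    rw [Walk.support_nil, List.mem_singleton] at hy
    subst hy; exact hv₀
  · intro y hy
    exact notMem_empty y
  · intro t ht
    exact absurd ht (notMem_empty t)
  · rw [card_empty]; omega
  · simp only [Walk.length_nil]; omega
  · simp only [Walk.length_nil, card_empty]; omega
end

section
/- An (n,d,λ)-graph is an α-expander with α = (d − λ)/(2d). That is, if G is a d-regular graph on n vertices such that for every vertex set U with |U| ≤ ⌈n/2⌉ the number of edges leaving U can be bounded via the spectral gap, and all eigenvalues of the adjacency matrix other than d have absolute value at most λ < d, then every vertex set U with |U| ≤ ⌈n/2⌉ satisfies |N_G(U)| ≥ ((d−λ)/(2d))·|U|. -/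
open Finset SimpleGraph
open scoped Classical

section Aux

variable {V : Type*} [Fintype V]

lemma row_sum (G : SimpleGraph V) {d : ℕ} (hreg : G.IsRegularOfDegree d) (v : V) :
    ∑ w, (if G.Adj v w then (1:ℝ) else 0) = d := by
  rw [Finset.sum_boole]
  rw [← neighborFinset_eq_filter, ← SimpleGraph.degree, hreg v]

lemma col_sum (G : SimpleGraph V) {d : ℕ} (hreg : G.IsRegularOfDegree d) (w : V) :
    ∑ v, (if G.Adj v w then (1:ℝ) else 0) = d := by
  simp_rw [G.adj_comm]
  exact row_sum G hreg w

lemma ind_sum (U : Finset V) : ∑ v, (if v ∈ U then (1:ℝ) else 0) = U.card := by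
  rw [Finset.sum_boole]; simp

lemma row_sum_in (G : SimpleGraph V) {d : ℕ} (hreg : G.IsRegularOfDegree d)
    {U B : Finset V} (hUB : ∀ v ∈ U, ∀ w, G.Adj v w → w ∈ B) {v : V} (hv : v ∈ U) :
    ∑ w, (if G.Adj v w then (if w ∈ B then (1:ℝ) else 0) else 0) = d := by
  rw [← row_sum G hreg v]
  refine Finset.sum_congr rfl fun w _ => ?_
  by_cases h : G.Adj v w
  · simp [h, hUB v hv w h]
  · simp [h]

lemma sum_f_zero [Nonempty V] (U : Finset V) :
    ∑ v, ((if v ∈ U then (1:ℝ) else 0) - (U.card : ℝ) / (Fintype.card V : ℝ)) = 0 := by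
  have hn : (0:ℝ) < (Fintype.card V : ℝ) := by
    exact_mod_cast Fintype.card_pos
  rw [Finset.sum_sub_distrib, ind_sum, Finset.sum_const, Finset.card_univ, nsmul_eq_mul]
  field_simp
  simp

lemma sum_f_sq [Nonempty V] (U : Finset V) :
    ∑ v, ((if v ∈ U then (1:ℝ) else 0) - (U.card : ℝ) / (Fintype.card V : ℝ)) ^ 2
      = (U.card : ℝ) * ((Fintype.card V : ℝ) - U.card) / (Fintype.card V : ℝ) := by
  have hn : (0:ℝ) < (Fintype.card V : ℝ) := by exact_mod_cast Fintype.card_pos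
  set n : ℝ := (Fintype.card V : ℝ)
  set c : ℝ := (U.card : ℝ) / n
  have hpt : ∀ v : V, ((if v ∈ U then (1:ℝ) else 0) - c) ^ 2
      = (1 - 2*c) * (if v ∈ U then (1:ℝ) else 0) + c^2 := by
    intro v; split_ifs <;> ring
  simp_rw [hpt]
  rw [Finset.sum_add_distrib, ← Finset.mul_sum, ind_sum, Finset.sum_const,
    Finset.card_univ, nsmul_eq_mul]
  show (1 - 2*c) * U.card + n * c^2 = (U.card : ℝ) * (n - U.card) / n
  field_simp [c]
  have hc : n * c = U.card := by simp only [c]; field_simp [hn.ne']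
  linear_combination (n * c - (U.card:ℝ)) * hc

lemma bil_val [Nonempty V] (G : SimpleGraph V) {d : ℕ} (hreg : G.IsRegularOfDegree d)
    {U B : Finset V} (hUB : ∀ v ∈ U, ∀ w, G.Adj v w → w ∈ B) :
    ∑ v, ∑ w, (if G.Adj v w then
        ((if v ∈ U then (1:ℝ) else 0) - (U.card : ℝ) / (Fintype.card V : ℝ))
        * ((if w ∈ B then (1:ℝ) else 0) - (B.card : ℝ) / (Fintype.card V : ℝ)) else 0)
      = (d : ℝ) * U.card * ((Fintype.card V : ℝ) - B.card) / (Fintype.card V : ℝ) := by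
  have hn : (0:ℝ) < (Fintype.card V : ℝ) := by exact_mod_cast Fintype.card_pos
  set n : ℝ := (Fintype.card V : ℝ) with hn'
  set p : ℝ := (U.card : ℝ) / n
  set q : ℝ := (B.card : ℝ) / n
  have hpt : ∀ v w : V, (if G.Adj v w then
        ((if v ∈ U then (1:ℝ) else 0) - p) * ((if w ∈ B then (1:ℝ) else 0) - q) else 0)
      = (if v ∈ U then (1:ℝ) else 0) * (if G.Adj v w then (if w ∈ B then (1:ℝ) else 0) else 0)
        - q * ((if v ∈ U then (1:ℝ) else 0) * (if G.Adj v w then (1:ℝ) else 0))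
        - p * (if G.Adj v w then (if w ∈ B then (1:ℝ) else 0) else 0)
        + (p * q) * (if G.Adj v w then (1:ℝ) else 0) := by
    intro v w; split_ifs <;> ring
  simp_rw [hpt, Finset.sum_add_distrib, Finset.sum_sub_distrib, ← Finset.mul_sum]
  have T1 : ∑ v, (if v ∈ U then (1:ℝ) else 0)
      * (∑ w, (if G.Adj v w then (if w ∈ B then (1:ℝ) else 0) else 0)) = (d:ℝ) * U.card := by
    have h1 : ∀ v : V, (if v ∈ U then (1:ℝ) else 0)
        * (∑ w, (if G.Adj v w then (if w ∈ B then (1:ℝ) else 0) else 0))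
        = (if v ∈ U then (d:ℝ) else 0) := by
      intro v
      by_cases hv : v ∈ U
      · simp [hv, row_sum_in G hreg hUB hv]
      · simp [hv]
    simp_rw [h1]
    rw [Finset.sum_ite_mem, Finset.univ_inter, Finset.sum_const, nsmul_eq_mul]
    ring
  have T2 : ∑ v, (if v ∈ U then (1:ℝ) else 0) * (∑ w, (if G.Adj v w then (1:ℝ) else 0))
      = (d:ℝ) * U.card := by
    simp_rw [row_sum G hreg]
    rw [← Finset.sum_mul, ind_sum]; ring
  have T3 : ∑ v, (∑ w, (if G.Adj v w then (if w ∈ B then (1:ℝ) else 0) else 0))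
      = (d:ℝ) * B.card := by
    rw [Finset.sum_comm]
    have h2 : ∀ w : V, (∑ v, (if G.Adj v w then (if w ∈ B then (1:ℝ) else 0) else 0))
        = (if w ∈ B then (d:ℝ) else 0) := by
      intro w
      have h3 : ∀ v : V, (if G.Adj v w then (if w ∈ B then (1:ℝ) else 0) else 0)
          = (if w ∈ B then (1:ℝ) else 0) * (if G.Adj v w then (1:ℝ) else 0) := by
        intro v; split_ifs <;> ring
      simp_rw [h3, ← Finset.mul_sum, col_sum G hreg]
      split_ifs <;> ring
    simp_rw [h2]
    rw [Finset.sum_ite_mem, Finset.univ_inter, Finset.sum_const, nsmul_eq_mul]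
    ring
  have T4 : ∑ v : V, (∑ w, (if G.Adj v w then (1:ℝ) else 0)) = (d:ℝ) * n := by
    simp_rw [row_sum G hreg]
    rw [Finset.sum_const, Finset.card_univ, nsmul_eq_mul, hn']
    ring
  rw [T1, T2, T3, T4]
  show (d:ℝ) * U.card - q * ((d:ℝ) * U.card) - p * ((d:ℝ) * B.card) + p * q * ((d:ℝ) * n)
      = (d : ℝ) * U.card * (n - B.card) / n
  field_simp [p, q]
  have hp : n * p = U.card := by simp only [p]; field_simp [hn.ne']
  have hq : n * q = B.card := by simp only [q]; field_simp [hn.ne']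
  linear_combination (d:ℝ) * (n * q - (B.card:ℝ)) * hp

lemma bil_sq_le (G : SimpleGraph V) (lam : ℝ)
    (hspec : ∀ x : V → ℝ, (∑ v, x v) = 0 →
      |∑ v, ∑ w, (if G.Adj v w then x v * x w else 0)| ≤ lam * ∑ v, (x v) ^ 2)
    (f g : V → ℝ) (hf : (∑ v, f v) = 0) (hg : (∑ v, g v) = 0) :
    (∑ v, ∑ w, if G.Adj v w then f v * g w else 0) ^ 2
      ≤ lam ^ 2 * (∑ v, (f v) ^ 2) * (∑ v, (g v) ^ 2) := by
  set Bv := ∑ v, ∑ w, if G.Adj v w then f v * g w else 0 with hBv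
  set Qf := ∑ v, ∑ w, if G.Adj v w then f v * f w else 0 with hQf
  set Qg := ∑ v, ∑ w, if G.Adj v w then g v * g w else 0 with hQg
  set Sf := ∑ v, (f v) ^ 2 with hSf
  set Sg := ∑ v, (g v) ^ 2 with hSg
  set Sfg := ∑ v, f v * g v with hSfg
  have hsym : (∑ v, ∑ w, if G.Adj v w then g v * f w else 0) = Bv := by
    rw [hBv, Finset.sum_comm]
    refine Finset.sum_congr rfl fun x _ => Finset.sum_congr rfl fun y _ => ?_
    rw [G.adj_comm, mul_comm]
  have expand : ∀ t : ℝ,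
      (∑ v, ∑ w, if G.Adj v w then (f v + t * g v) * (f w + t * g w) else 0)
        = Qf + 2 * t * Bv + t ^ 2 * Qg := by
    intro t
    have hpt : ∀ v w : V, (if G.Adj v w then (f v + t * g v) * (f w + t * g w) else 0)
        = (if G.Adj v w then f v * f w else 0) + t * (if G.Adj v w then f v * g w else 0)
          + t * (if G.Adj v w then g v * f w else 0)
          + (t * t) * (if G.Adj v w then g v * g w else 0) := by
      intro v w; split_ifs <;> ring
    simp_rw [hpt, Finset.sum_add_distrib, ← Finset.mul_sum]
    rw [hsym, ← hQf, ← hQg, ← hBv]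
    ring
  have sqexpand : ∀ t : ℝ, (∑ v, (f v + t * g v) ^ 2) = Sf + 2 * t * Sfg + t ^ 2 * Sg := by
    intro t
    have hpt : ∀ v : V, (f v + t * g v) ^ 2
        = (f v) ^ 2 + (2 * t) * (f v * g v) + (t * t) * (g v) ^ 2 := by
      intro v; ring
    simp_rw [hpt, Finset.sum_add_distrib, ← Finset.mul_sum]
    rw [← hSf, ← hSg, ← hSfg]; ring
  have key : ∀ t : ℝ, 0 ≤ (2 * lam * Sg) * (t * t) + (-(4 * Bv)) * t + 2 * lam * Sf := by
    intro t
    have sum1 : (∑ v, (f v + t * g v)) = 0 := by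
      rw [Finset.sum_add_distrib, ← Finset.mul_sum, hf, hg]; ring
    have sum2 : (∑ v, (f v + (-t) * g v)) = 0 := by
      rw [Finset.sum_add_distrib, ← Finset.mul_sum, hf, hg]; ring
    have h1 := hspec (fun v => f v + t * g v) sum1
    have h2 := hspec (fun v => f v + (-t) * g v) sum2
    rw [expand t, sqexpand t] at h1
    rw [expand (-t), sqexpand (-t)] at h2
    have a1 : Qf + 2 * t * Bv + t ^ 2 * Qg ≤ lam * (Sf + 2 * t * Sfg + t ^ 2 * Sg) :=
      le_trans (le_abs_self _) h1
    have a2 : -(lam * (Sf + 2 * (-t) * Sfg + (-t) ^ 2 * Sg))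
        ≤ Qf + 2 * (-t) * Bv + (-t) ^ 2 * Qg := by
      have := neg_abs_le (Qf + 2 * (-t) * Bv + (-t) ^ 2 * Qg)
      linarith [h2]
    nlinarith [a1, a2]
  have hdisc := discrim_le_zero key
  rw [discrim] at hdisc
  nlinarith [hdisc]


lemma final_algebra (dr lam ur sr nr br : ℝ)
    (hlam0 : 0 ≤ lam) (hlamd : lam < dr) (hdrpos : 0 < dr)
    (hu1R : 1 ≤ ur) (hsrnn : 0 ≤ sr) (hbr' : br = ur + sr) (hbnR : br ≤ nr)
    (hmR : ur ≤ 2 * (nr - ur))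
    (hkey : (dr * ur * (nr - br)) ^ 2 ≤ lam ^ 2 * (ur * (nr - ur)) * (br * (nr - br))) :
    (dr - lam) / (2 * dr) * ur ≤ sr := by
  rw [div_mul_eq_mul_div, div_le_iff₀ (by positivity : (0:ℝ) < 2 * dr)]
  by_cases hcase : ur ≤ 2 * sr
  · nlinarith
  · push_neg at hcase
    have hcpos : 0 < nr - br := by rw [hbr']; linarith
    have hupos : (0:ℝ) < ur := by linarith
    have h2 : (dr ^ 2 * ur * (nr - br)) * (ur * (nr - br))
        ≤ (lam ^ 2 * (nr - ur) * br) * (ur * (nr - br)) := by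
      linear_combination hkey
    have step1 : dr ^ 2 * ur * (nr - br) ≤ lam ^ 2 * (nr - ur) * br :=
      le_of_mul_le_mul_right h2 (mul_pos hupos hcpos)
    rw [hbr'] at step1
    set mr : ℝ := nr - ur with hmr
    have hmpos : (0:ℝ) < mr := by rw [hmr]; linarith
    have step1' : dr ^ 2 * ur * (mr - sr) ≤ lam ^ 2 * mr * (ur + sr) := by
      rw [hmr]; linear_combination step1
    have hrearr : ur * mr * (dr ^ 2 - lam ^ 2)
        ≤ sr * (dr ^ 2 * ur + lam ^ 2 * mr) := by linarith [step1']
    have hDle : dr ^ 2 * ur + lam ^ 2 * mr ≤ 2 * dr * mr * (dr + lam) := by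
      have e1 : dr ^ 2 * ur ≤ dr ^ 2 * (2 * mr) := by
        have := mul_le_mul_of_nonneg_left hmR (sq_nonneg dr)
        rw [hmr]; rw [hmr] at this
        linarith
      have e2 : lam ^ 2 * mr ≤ (2 * dr * lam) * mr := by
        have hl2 : lam ^ 2 ≤ 2 * dr * lam := by nlinarith
        exact mul_le_mul_of_nonneg_right hl2 hmpos.le
      nlinarith [e1, e2]
    have hDpos : (0:ℝ) < dr ^ 2 * ur + lam ^ 2 * mr := by
      have h1 : (0:ℝ) < dr ^ 2 * ur := by positivity
      nlinarith [mul_nonneg (sq_nonneg lam) hmpos.le]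
    have h3 : ((dr - lam) * ur) * (dr ^ 2 * ur + lam ^ 2 * mr)
        ≤ (sr * (2 * dr)) * (dr ^ 2 * ur + lam ^ 2 * mr) := by
      have hint1 := mul_le_mul_of_nonneg_left hDle
        (by nlinarith : (0:ℝ) ≤ (dr - lam) * ur)
      have hint2 := mul_le_mul_of_nonneg_left hrearr (by linarith : (0:ℝ) ≤ 2 * dr)
      nlinarith [hint1, hint2]
    exact le_of_mul_le_mul_right h3 hDpos

end Aux

/-- an `(n,d,λ)`-graph is an α-expander with `α = (d-λ)/(2d)`.
The spectral condition "all eigenvalues of the adjacency matrix other than `d` have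
absolute value at most `λ`" is expressed (equivalently, for a `d`-regular graph, with
multiplicity) by the Rayleigh-quotient bound on the orthogonal complement of the
constant vector. -/
theorem ndl_graph_is_expander {V : Type*} [Fintype V] [Nonempty V]
    (G : SimpleGraph V) (d : ℕ) (lam : ℝ)
    (hreg : G.IsRegularOfDegree d) (hd : 0 < d) (hlam : lam < d)
    (hspec : ∀ x : V → ℝ, (∑ v, x v) = 0 →
      |∑ v, ∑ w, (if G.Adj v w then x v * x w else 0)| ≤ lam * ∑ v, (x v) ^ 2) :
    IsAlphaExpander G (((d : ℝ) - lam) / (2 * d)) := by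
  intro U hU
  set n : ℕ := Fintype.card V with hn
  -- n ≥ 2
  obtain ⟨v0⟩ := ‹Nonempty V›
  have hdn : d < n := by
    have := G.degree_lt_card_verts v0
    rw [hreg v0] at this
    exact this
  have hn2 : 2 ≤ n := by omega
  have hnpos : (0:ℝ) < (n:ℝ) := by positivity
  -- lam ≥ 0
  have hlam0 : (0:ℝ) ≤ lam := by
    by_contra hneg
    push_neg at hneg
    have h0 := hspec _ (sum_f_zero ({v0} : Finset V))
    rw [sum_f_sq ({v0} : Finset V)] at h0
    have habs : (0:ℝ) ≤ lam * ((({v0} : Finset V).card : ℝ) * ((n:ℝ) - ({v0} : Finset V).card) / (n:ℝ)) :=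
      le_trans (abs_nonneg _) h0
    have hcard1 : (({v0} : Finset V).card : ℝ) = 1 := by simp
    rw [hcard1] at habs
    have hpos : (0:ℝ) < 1 * ((n:ℝ) - 1) / (n:ℝ) := by
      apply div_pos
      · have : (2:ℝ) ≤ (n:ℝ) := by exact_mod_cast hn2
        nlinarith
      · exact hnpos
    nlinarith
  -- trivial case
  by_cases hu0 : U.card = 0
  · rw [hu0]
    simp
  have hu1 : 1 ≤ U.card := Nat.one_le_iff_ne_zero.mpr hu0
  -- set up B
  set Bs : Finset V := U ∪ extNbhd G U with hBs
  have hdisj : Disjoint U (extNbhd G U) := by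
    rw [Finset.disjoint_right]
    intro a ha
    rw [extNbhd, Finset.mem_filter] at ha
    exact ha.2.1
  have hbcard : Bs.card = U.card + (extNbhd G U).card :=
    Finset.card_union_of_disjoint hdisj
  have hUB : ∀ v ∈ U, ∀ w, G.Adj v w → w ∈ Bs := by
    intro v hv w hvw
    by_cases hw : w ∈ U
    · exact Finset.mem_union_left _ hw
    · refine Finset.mem_union_right _ ?_
      rw [extNbhd, Finset.mem_filter]
      exact ⟨Finset.mem_univ _, hw, v, hv, hvw⟩
  have hbn : Bs.card ≤ n := by
    rw [hn, ← Finset.card_univ]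
    exact Finset.card_le_card (Finset.subset_univ _)
  have hun : U.card ≤ n := by
    rw [hn, ← Finset.card_univ]
    exact Finset.card_le_card (Finset.subset_univ _)
  have hu2 : U.card * 2 ≤ n + 1 := by
    rw [hn]
    exact (Nat.le_div_iff_mul_le (by norm_num)).mp hU
  -- key spectral inequality
  have hkey0 := bil_sq_le G lam hspec _ _ (sum_f_zero U) (sum_f_zero Bs)
  rw [bil_val G hreg hUB, sum_f_sq U, sum_f_sq Bs] at hkey0
  -- real variables
  set ur : ℝ := (U.card : ℝ) with hur
  set sr : ℝ := ((extNbhd G U).card : ℝ) with hsr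
  set br : ℝ := (Bs.card : ℝ) with hbr
  set nr : ℝ := (n : ℝ) with hnr
  set dr : ℝ := (d : ℝ) with hdr
  have hbr' : br = ur + sr := by rw [hbr, hbcard]; push_cast; ring
  have hbnR : br ≤ nr := by rw [hbr, hnr]; exact_mod_cast hbn
  have hu1R : (1:ℝ) ≤ ur := by rw [hur]; exact_mod_cast hu1
  have hsrnn : (0:ℝ) ≤ sr := by rw [hsr]; positivity
  have hdrpos : (0:ℝ) < dr := by rw [hdr]; exact_mod_cast hd
  have hlamd : lam < dr := hlam
  have hmR : ur ≤ 2 * (nr - ur) := by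
    have h2m : U.card ≤ 2 * (n - U.card) := by omega
    have : (U.card : ℝ) ≤ (2 * (n - U.card) : ℕ) := by exact_mod_cast h2m
    rw [Nat.cast_mul, Nat.cast_sub hun] at this
    rw [hur, hnr]
    exact_mod_cast this
  -- multiply key by nr^2
  have hkey : (dr * ur * (nr - br)) ^ 2 ≤ lam ^ 2 * (ur * (nr - ur)) * (br * (nr - br)) := by
    have hstep := mul_le_mul_of_nonneg_right hkey0 (le_of_lt (by positivity : (0:ℝ) < nr ^ 2))
    have e1 : (dr * ur * (nr - br) / nr) ^ 2 * nr ^ 2 = (dr * ur * (nr - br)) ^ 2 := by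
      field_simp
    have e2 : lam ^ 2 * (ur * (nr - ur) / nr) * (br * (nr - br) / nr) * nr ^ 2
        = lam ^ 2 * (ur * (nr - ur)) * (br * (nr - br)) := by
      field_simp
    rw [e1, e2] at hstep
    exact hstep
  -- final algebra
  show (dr - lam) / (2 * dr) * ur ≤ sr
  exact final_algebra dr lam ur sr nr br hlam0 hlamd hdrpos hu1R hsrnn hbr' hbnR hmR hkey
end
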